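/- arXiv:2104.11047 — 5 statements merged into one kernel-verified Lean document; each statement's English description precedes it below -/
import Mathlib

section
/- Let p be as above. Then there exist positive constants c′, C′ and ρ such that c′|z|^{2k} ≤ Re p(z) ≤ C′|z|^{2k} for every z ∈ Γ_ρ, where Γ_ρ = {z = x + iy ∈ ℂ^N : |y| ≤ ρ|x|}. -/
/-! By homogeneity it suffices to bound `Re p` on the unit vectors of `Γ_ρ`. The upper bound is
compactness of the unit sphere. For the lower bound, `Re p > c / 2` on an open set containing the
compact set of real unit vectors, hence on a `δ`-thickening of it, and every unit vector of `Γ_ρ`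
is within `4ρ` of a real unit vector once `ρ ≤ 1/4`. -/

open MeasureTheory Metric Complex Filter

noncomputable section

/-- The canonical embedding of `ℝ^N` into `ℂ^N`. -/
def cV {N : ℕ} (x : EuclideanSpace ℝ (Fin N)) : EuclideanSpace ℂ (Fin N) :=
  WithLp.toLp 2 (fun j => (x j : ℂ))

/-- The real part of a vector in `ℂ^N`. -/
def reV {N : ℕ} (z : EuclideanSpace ℂ (Fin N)) : EuclideanSpace ℝ (Fin N) :=
  WithLp.toLp 2 (fun j => (z j).re)

/-- The imaginary part of a vector in `ℂ^N`. -/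
def imV {N : ℕ} (z : EuclideanSpace ℂ (Fin N)) : EuclideanSpace ℝ (Fin N) :=
  WithLp.toLp 2 (fun j => (z j).im)

/-- `p` is a homogeneous polynomial of degree `2k` on `ℂ^N` with real coefficients. -/
def IsRealHomog {N : ℕ} (k : ℕ) (p : EuclideanSpace ℂ (Fin N) → ℂ) : Prop :=
  ∃ (a : (Fin N → ℕ) → ℝ) (S : Finset (Fin N → ℕ)),
    (∀ α ∈ S, ∑ j, α j = 2 * k) ∧
    ∀ z : EuclideanSpace ℂ (Fin N), p z = ∑ α ∈ S, (a α : ℂ) * ∏ j, z j ^ α j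


section Homogeneous

variable {E : Type*} [NormedAddCommGroup E] [NormedSpace ℝ E]

theorem bounds_of_bounds_on_unit_sphere {f : E → ℝ} {m : ℕ} (hm : m ≠ 0)
    (hf : ∀ (t : ℝ) (z : E), f (t • z) = t ^ m * f z) {S : Set E}
    (hS : ∀ t : ℝ, 0 < t → ∀ z ∈ S, t • z ∈ S) {a b : ℝ}
    (hab : ∀ u ∈ S, ‖u‖ = 1 → a ≤ f u ∧ f u ≤ b) :
    ∀ z ∈ S, a * ‖z‖ ^ m ≤ f z ∧ f z ≤ b * ‖z‖ ^ m := by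
  intro z hz
  rcases eq_or_ne z 0 with rfl | hz0
  · have hf0 : f 0 = 0 := by simpa [zero_pow hm] using hf 0 0
    simp [hf0, zero_pow hm]
  · have hnorm : 0 < ‖z‖ := norm_pos_iff.2 hz0
    set u := ‖z‖⁻¹ • z
    have hzu : f z = ‖z‖ ^ m * f u := by
      rw [← hf, smul_inv_smul₀ hnorm.ne']
    obtain ⟨hau, hub⟩ := hab u (hS _ (inv_pos.2 hnorm) z hz) (norm_smul_inv_norm hz0)
    rw [hzu, mul_comm a, mul_comm b]
    exact ⟨by gcongr, by gcongr⟩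

end Homogeneous

namespace IsRealHomog

variable {N k : ℕ} {p : EuclideanSpace ℂ (Fin N) → ℂ}

theorem map_real_smul (hp : IsRealHomog k p) (t : ℝ) (z : EuclideanSpace ℂ (Fin N)) :
    p (t • z) = (t : ℂ) ^ (2 * k) * p z := by
  obtain ⟨a, S, hS, hform⟩ := hp
  rw [hform, hform, Finset.mul_sum]
  refine Finset.sum_congr rfl fun α hα => ?_
  simp_rw [PiLp.smul_apply, Complex.real_smul, mul_pow, Finset.prod_mul_distrib,
    Finset.prod_pow_eq_pow_sum, hS α hα]
  ring

theorem continuous (hp : IsRealHomog k p) : Continuous p := by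
  obtain ⟨a, S, -, hform⟩ := hp
  rw [funext hform]
  fun_prop

end IsRealHomog

section ComplexCone

variable {N : ℕ}

/-- The conic neighbourhood `Γ_ρ` of `ℝ^N \ {0}` in `ℂ^N`. -/
def conicNbhd (N : ℕ) (ρ : ℝ) : Set (EuclideanSpace ℂ (Fin N)) :=
  {z | ‖imV z‖ ≤ ρ * ‖reV z‖}

theorem cV_sub (x y : EuclideanSpace ℝ (Fin N)) : cV (x - y) = cV x - cV y := by
  ext j
  simp [cV]

theorem norm_cV (x : EuclideanSpace ℝ (Fin N)) : ‖cV x‖ = ‖x‖ := by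
  simp [EuclideanSpace.norm_eq, cV]

theorem isometry_cV : Isometry (cV (N := N)) :=
  Isometry.of_dist_eq fun x y => by rw [dist_eq_norm, dist_eq_norm, ← cV_sub, norm_cV]

theorem norm_sub_cV_reV (z : EuclideanSpace ℂ (Fin N)) : ‖z - cV (reV z)‖ = ‖imV z‖ := by
  have hcoord : ∀ j, (z - cV (reV z)) j = ((z j).im : ℂ) * I := fun j => by
    simp [cV, reV, Complex.ext_iff]
  simp [EuclideanSpace.norm_eq, hcoord, imV]

theorem reV_smul (t : ℝ) (z : EuclideanSpace ℂ (Fin N)) : reV (t • z) = t • reV z := by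
  ext j
  simp [reV]

theorem imV_smul (t : ℝ) (z : EuclideanSpace ℂ (Fin N)) : imV (t • z) = t • imV z := by
  ext j
  simp [imV]

theorem smul_mem_conicNbhd {ρ t : ℝ} (ht : 0 < t) {z : EuclideanSpace ℂ (Fin N)}
    (hz : z ∈ conicNbhd N ρ) : t • z ∈ conicNbhd N ρ := by
  simp only [conicNbhd, Set.mem_ofPred_eq, reV_smul, imV_smul, norm_smul,
    Real.norm_of_nonneg ht.le]
  rw [mul_left_comm]
  exact mul_le_mul_of_nonneg_left hz ht.le

theorem exists_norm_eq_one_dist_cV_le {ρ : ℝ} (hρ0 : 0 ≤ ρ) (hρ : ρ ≤ 1 / 4)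
    {u : EuclideanSpace ℂ (Fin N)} (hu : ‖u‖ = 1) (hcone : u ∈ conicNbhd N ρ) :
    ∃ x : EuclideanSpace ℝ (Fin N), ‖x‖ = 1 ∧ dist u (cV x) ≤ 4 * ρ := by
  set x := reV u
  have hdist : ‖u - cV x‖ = ‖imV u‖ := norm_sub_cV_reV u
  have hnorm : |1 - ‖x‖| ≤ ‖imV u‖ := by
    simpa [hu, norm_cV, hdist] using abs_norm_sub_norm_le u (cV x)
  have him : ‖imV u‖ ≤ 2 * ρ := by
    have hcone' : ‖imV u‖ ≤ ρ * ‖x‖ := hcone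
    obtain ⟨hlo, hhi⟩ := abs_le.1 hnorm
    nlinarith [norm_nonneg (imV u)]
  have hx : x ≠ 0 := by
    rintro hx
    simp only [hx, norm_zero] at hnorm
    linarith [abs_le.1 hnorm]
  refine ⟨(‖x‖⁻¹ : ℝ) • x, norm_smul_inv_norm hx, ?_⟩
  have hscale : dist x ((‖x‖⁻¹ : ℝ) • x) = |1 - ‖x‖| := calc
    dist x ((‖x‖⁻¹ : ℝ) • x) = ‖(1 - ‖x‖⁻¹) • x‖ := by
      rw [dist_eq_norm, sub_smul, one_smul]
    _ = |(1 - ‖x‖⁻¹) * ‖x‖| := by rw [norm_smul, Real.norm_eq_abs, abs_mul, abs_norm]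
    _ = |1 - ‖x‖| := by
      rw [sub_mul, one_mul, inv_mul_cancel₀ (norm_ne_zero_iff.2 hx), abs_sub_comm]
  calc dist u (cV ((‖x‖⁻¹ : ℝ) • x))
      ≤ dist u (cV x) + dist (cV x) (cV ((‖x‖⁻¹ : ℝ) • x)) := dist_triangle _ _ _
    _ = ‖imV u‖ + |1 - ‖x‖| := by rw [dist_eq_norm, hdist, isometry_cV.dist_eq, hscale]
    _ ≤ 4 * ρ := by linarith

theorem exists_lt_on_unit_conicNbhd {f : EuclideanSpace ℂ (Fin N) → ℝ}
    (hf : Continuous f) {a : ℝ}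
    (ha : ∀ x : EuclideanSpace ℝ (Fin N), ‖x‖ = 1 → a < f (cV x)) :
    ∃ ρ > 0, ∀ u ∈ conicNbhd N ρ, ‖u‖ = 1 → a < f u := by
  obtain ⟨δ, hδ, hsub⟩ :=
    ((isCompact_sphere (0 : EuclideanSpace ℝ (Fin N)) 1).image isometry_cV.continuous)
      |>.exists_cthickening_subset_open (isOpen_lt continuous_const hf) <| by
        rintro _ ⟨x, hx, rfl⟩
        exact ha x (by simpa using hx)
  refine ⟨min (δ / 4) (1 / 4), by positivity, fun u hu hu1 => hsub ?_⟩
  obtain ⟨x, hx, hdist⟩ :=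
    exists_norm_eq_one_dist_cV_le (by positivity) (min_le_right _ _) hu1 hu
  refine mem_cthickening_of_dist_le u (cV x) δ _ ⟨x, by simpa using hx, rfl⟩ ?_
  linarith [min_le_left (δ / 4) (1 / 4)]

end ComplexCone

theorem stmt1_general (N k : ℕ) (hk : 1 ≤ k)
    (p : EuclideanSpace ℂ (Fin N) → ℂ) (hp : IsRealHomog k p)
    (c : ℝ) (hc : 0 < c)
    (hlow : ∀ x : EuclideanSpace ℝ (Fin N), c * ‖x‖ ^ (2 * k) ≤ (p (cV x)).re) :
    ∃ c' C' ρ : ℝ, 0 < c' ∧ 0 < C' ∧ 0 < ρ ∧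
      ∀ z : EuclideanSpace ℂ (Fin N), ‖imV z‖ ≤ ρ * ‖reV z‖ →
        c' * ‖z‖ ^ (2 * k) ≤ (p z).re ∧ (p z).re ≤ C' * ‖z‖ ^ (2 * k) := by
  have hcont : Continuous fun z => (p z).re := Complex.continuous_re.comp hp.continuous
  obtain ⟨ρ, hρ, hlower⟩ := exists_lt_on_unit_conicNbhd hcont (a := c / 2) fun x hx => by
    have hx' := hlow x
    rw [hx, one_pow, mul_one] at hx'
    linarith
  obtain ⟨M, hM, hupper⟩ :=
    ((isCompact_sphere (0 : EuclideanSpace ℂ (Fin N)) 1).image hcont).isBounded.exists_pos_norm_le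
  refine ⟨c / 2, M, ρ, by positivity, hM, hρ, fun z hz => ?_⟩
  refine bounds_of_bounds_on_unit_sphere (by omega) (fun t z => ?_)
    (fun t ht z hz => smul_mem_conicNbhd ht hz)
    (fun u hu hu1 => ⟨(hlower u hu hu1).le, ?_⟩) z hz
  · rw [hp.map_real_smul, ← Complex.ofReal_pow, Complex.re_ofReal_mul]
  · exact (le_abs_self _).trans (hupper _ ⟨u, by simpa using hu1, rfl⟩)

/-- The two-sided bound `c|x|^{2k} ≤ p(x) ≤ C|x|^{2k}` for real `x`
extends to a conic complex neighborhood `Γ_ρ = {x + iy : |y| ≤ ρ|x|}` of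
`ℝ^N \ {0}`, for the real part of `p`. -/
theorem stmt1 (N k : ℕ) (hN : 1 ≤ N) (hk : 1 ≤ k)
    (p : EuclideanSpace ℂ (Fin N) → ℂ) (hp : IsRealHomog k p)
    (c C : ℝ) (hc : 0 < c) (hC : 0 < C)
    (hlow : ∀ x : EuclideanSpace ℝ (Fin N), c * ‖x‖ ^ (2 * k) ≤ (p (cV x)).re)
    (hupp : ∀ x : EuclideanSpace ℝ (Fin N), (p (cV x)).re ≤ C * ‖x‖ ^ (2 * k)) :
    ∃ c' C' ρ : ℝ, 0 < c' ∧ 0 < C' ∧ 0 < ρ ∧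
      ∀ z : EuclideanSpace ℂ (Fin N), ‖imV z‖ ≤ ρ * ‖reV z‖ →
        c' * ‖z‖ ^ (2 * k) ≤ (p z).re ∧ (p z).re ≤ C' * ‖z‖ ^ (2 * k) :=
  stmt1_general N k hk p hp c hc hlow

end
end

section
/- Let p, c_p be as above, set Ψ(z) = c_p e^{−p(z)}, and let λ ∈ (0, 1/k). Then for every compact set K ⊂ ℝ^N, every δ > 0 and every ε ∈ (0,1) there exists M > 0 such that ∫_{ℝ^N} e^{−ε|ξ|²} ( ∫_{ℝ^N} |Ψ(|ξ|^λ (τ − w))| |ξ|^{λN} dτ ) dξ < M for all w ∈ K_δ. -/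
open MeasureTheory Metric Complex Filter
open scoped ENNReal

noncomputable section

/-! Writing `z = x + i y`, comparing each monomial of `p` at `z` and at `x` gives
`Re p(z) ≥ c |x|^{2k} - A |y| (|x| + |y|)^{2k-1} ≥ (c/2) |x|^{2k} - D |y|^{2k}`.
For `w ∈ (cV '' K)_δ` we have `|Im w| < δ`, so after the substitution `s = |ξ|^λ (τ - Re w)`,
whose Jacobian cancels the weight `|ξ|^{λN}`, the inner integral is at most
`c_p e^{D δ^{2k} |ξ|^{2kλ}} ∫ e^{-(c/2)|s|^{2k}} ds`. As `2kλ < 2`, the growing factor is absorbed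
by half of the Gaussian `e^{-ε|ξ|²}`, and what remains is integrable in `ξ`. -/

theorem norm_prod_sub_prod_le {ι R : Type*} [NormedCommRing R] [NormOneClass R]
    (s : Finset ι) (f g : ι → R) {M d : ℝ} (hf : ∀ i ∈ s, ‖f i‖ ≤ M)
    (hg : ∀ i ∈ s, ‖g i‖ ≤ M) (hfg : ∀ i ∈ s, ‖f i - g i‖ ≤ d) :
    ‖∏ i ∈ s, f i - ∏ i ∈ s, g i‖ ≤ s.card * d * M ^ (s.card - 1) := by
  classical
  induction s using Finset.induction_on with
  | empty => simp
  | @insert a s ha ih =>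
    simp only [Finset.forall_mem_insert] at hf hg hfg
    have hM : 0 ≤ M := (norm_nonneg _).trans hf.1
    have hd : 0 ≤ d := (norm_nonneg _).trans hfg.1
    have hprod : ‖∏ i ∈ s, f i‖ ≤ M ^ s.card :=
      (Finset.norm_prod_le s f).trans <|
        (Finset.prod_le_prod (fun _ _ => norm_nonneg _) hf.2).trans_eq (Finset.prod_const M)
    have hpow : M * (s.card * d * M ^ (s.card - 1)) = s.card * d * M ^ s.card := by
      rcases Nat.eq_zero_or_pos s.card with h | h
      · simp [h]
      · rw [← mul_pow_sub_one h.ne' M]; ring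
    rw [Finset.prod_insert ha, Finset.prod_insert ha, Finset.card_insert_of_notMem ha,
      Nat.add_sub_cancel, Nat.cast_succ]
    calc ‖f a * ∏ i ∈ s, f i - g a * ∏ i ∈ s, g i‖
        = ‖(f a - g a) * ∏ i ∈ s, f i + g a * (∏ i ∈ s, f i - ∏ i ∈ s, g i)‖ := by
          congr 1; ring
      _ ≤ ‖f a - g a‖ * ‖∏ i ∈ s, f i‖ + ‖g a‖ * ‖∏ i ∈ s, f i - ∏ i ∈ s, g i‖ :=
          (norm_add_le _ _).trans (add_le_add (norm_mul_le _ _) (norm_mul_le _ _))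
      _ ≤ d * M ^ s.card + M * (s.card * d * M ^ (s.card - 1)) := by
          gcongr
          · exact hfg.1
          · exact hg.1
          · exact ih hf.2 hg.2 hfg.2
      _ = (s.card + 1) * d * M ^ s.card := by rw [hpow]; ring

theorem exists_mul_mul_add_pow_le (n : ℕ) {A ε : ℝ} (hA : 0 ≤ A) (hε : 0 < ε) :
    ∃ D, 0 ≤ D ∧ ∀ x y : ℝ, 0 ≤ x → 0 ≤ y →
      A * y * (x + y) ^ n ≤ ε * x ^ (n + 1) + D * y ^ (n + 1) := by
  set η := min 1 (ε / (A * 2 ^ n + 1))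
  have hη₀ : 0 < η := lt_min one_pos (by positivity)
  have hη₁ : η ≤ 1 := min_le_left _ _
  have hηε : A * 2 ^ n * η ≤ ε := by
    calc A * 2 ^ n * η ≤ (A * 2 ^ n + 1) * (ε / (A * 2 ^ n + 1)) := by
          gcongr
          · linarith
          · exact min_le_right _ _
      _ = ε := by field_simp
  refine ⟨A * (1 + η⁻¹) ^ n, by positivity, fun x y hx hy => ?_⟩
  rcases le_total y (η * x) with hyx | hxy
  · have hx2 : x + y ≤ 2 * x := by nlinarith
    calc A * y * (x + y) ^ n ≤ A * (η * x) * (2 * x) ^ n := by gcongr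
      _ = A * 2 ^ n * η * x ^ (n + 1) := by ring
      _ ≤ ε * x ^ (n + 1) := by gcongr
      _ ≤ ε * x ^ (n + 1) + A * (1 + η⁻¹) ^ n * y ^ (n + 1) :=
          le_add_of_nonneg_right (by positivity)
  · have hxy' : x + y ≤ (1 + η⁻¹) * y := by
      have : x ≤ η⁻¹ * y := by rw [inv_mul_eq_div, le_div_iff₀' hη₀]; exact hxy
      linarith
    calc A * y * (x + y) ^ n ≤ A * y * ((1 + η⁻¹) * y) ^ n := by gcongr
      _ = A * (1 + η⁻¹) ^ n * y ^ (n + 1) := by rw [mul_pow]; ring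
      _ ≤ ε * x ^ (n + 1) + A * (1 + η⁻¹) ^ n * y ^ (n + 1) :=
          le_add_of_nonneg_left (by positivity)

theorem exists_mul_rpow_le {a : ℝ} (ha₀ : 0 ≤ a) (ha : a < 2) {B : ℝ} (hB : 0 ≤ B) {ε : ℝ}
    (hε : 0 < ε) : ∃ E, ∀ s : ℝ, 0 ≤ s → B * s ^ a ≤ ε * s ^ 2 + E := by
  obtain ⟨R, hRB, hR1⟩ := ((tendsto_rpow_atTop (sub_pos.2 ha)).eventually_ge_atTop (B / ε)
    |>.and (eventually_ge_atTop 1)).exists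
  refine ⟨B * R ^ a, fun s hs => ?_⟩
  rcases le_total s R with hsR | hRs
  · have : B * s ^ a ≤ B * R ^ a := by gcongr
    nlinarith [sq_nonneg s]
  · have hs₀ : 0 < s := by linarith
    calc B * s ^ a ≤ ε * R ^ (2 - a) * s ^ a := by
          gcongr; rwa [← div_le_iff₀' hε]
      _ ≤ ε * s ^ (2 - a) * s ^ a := by gcongr
      _ = ε * s ^ 2 := by rw [mul_assoc, ← Real.rpow_add hs₀, sub_add_cancel, Real.rpow_two]
      _ ≤ ε * s ^ 2 + B * R ^ a := le_add_of_nonneg_right (by positivity)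

section ComplexVectors

variable {N : ℕ}

def vecRe (z : EuclideanSpace ℂ (Fin N)) : EuclideanSpace ℝ (Fin N) :=
  WithLp.toLp 2 fun j => (z j).re

def vecIm (z : EuclideanSpace ℂ (Fin N)) : EuclideanSpace ℝ (Fin N) :=
  WithLp.toLp 2 fun j => (z j).im

theorem norm_vecIm_le (z : EuclideanSpace ℂ (Fin N)) : ‖vecIm z‖ ≤ ‖z‖ := by
  rw [EuclideanSpace.norm_eq, EuclideanSpace.norm_eq]
  gcongr with j
  exact abs_im_le_norm (z j)

theorem norm_apply_le_norm_vecRe_add_norm_vecIm (z : EuclideanSpace ℂ (Fin N)) (j : Fin N) :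
    ‖z j‖ ≤ ‖vecRe z‖ + ‖vecIm z‖ :=
  (norm_le_abs_re_add_abs_im _).trans <|
    add_le_add (PiLp.norm_apply_le (vecRe z) j) (PiLp.norm_apply_le (vecIm z) j)

theorem norm_sub_vecRe_apply_le (z : EuclideanSpace ℂ (Fin N)) (j : Fin N) :
    ‖z j - (vecRe z j : ℂ)‖ ≤ ‖vecIm z‖ := by
  have : z j - (vecRe z j : ℂ) = (vecIm z j : ℂ) * I := by
    apply Complex.ext <;> simp [vecRe, vecIm]
  rw [this, norm_mul, norm_I, mul_one, norm_real]
  exact PiLp.norm_apply_le (vecIm z) j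

theorem vecRe_smul_sub_cV (t : ℝ) (x : EuclideanSpace ℝ (Fin N)) (w : EuclideanSpace ℂ (Fin N)) :
    vecRe (t • (cV x - w)) = t • (x - vecRe w) := by
  ext j; simp [vecRe, cV]

theorem vecIm_smul_sub_cV (t : ℝ) (x : EuclideanSpace ℝ (Fin N)) (w : EuclideanSpace ℂ (Fin N)) :
    vecIm (t • (cV x - w)) = -(t • vecIm w) := by
  ext j; simp [vecIm, cV]

theorem norm_vecIm_lt_of_mem_thickening {δ : ℝ} {s : Set (EuclideanSpace ℝ (Fin N))}
    {w : EuclideanSpace ℂ (Fin N)} (hw : w ∈ thickening δ (cV '' s)) : ‖vecIm w‖ < δ := by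
  obtain ⟨_, ⟨x, -, rfl⟩, hxw⟩ := mem_thickening_iff.1 hw
  have : vecIm w = vecIm (w - cV x) := by ext j; simp [vecIm, cV]
  rw [this]
  exact (norm_vecIm_le _).trans_lt (dist_eq_norm w (cV x) ▸ hxw)

theorem norm_prod_pow_sub_prod_pow_vecRe_le (z : EuclideanSpace ℂ (Fin N)) (α : Fin N → ℕ) :
    ‖∏ j, z j ^ α j - ∏ j, (vecRe z j : ℂ) ^ α j‖
      ≤ (∑ j, α j) * ‖vecIm z‖ * (‖vecRe z‖ + ‖vecIm z‖) ^ (∑ j, α j - 1) := by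
  have hflat : ∀ f : Fin N → ℂ, ∏ j, f j ^ α j =
      ∏ q ∈ Finset.univ.sigma fun j => Finset.range (α j), f q.1 := fun f => by
    simp [Finset.prod_sigma]
  have hcard : (Finset.univ.sigma fun j => Finset.range (α j)).card = ∑ j, α j := by simp
  rw [hflat, hflat, ← hcard]
  refine norm_prod_sub_prod_le _ _ _ (fun q _ => norm_apply_le_norm_vecRe_add_norm_vecIm z q.1)
    (fun q _ => ?_) (fun q _ => norm_sub_vecRe_apply_le z q.1)
  rw [norm_real]
  exact (PiLp.norm_apply_le (vecRe z) q.1).trans (le_add_of_nonneg_right (norm_nonneg _))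

end ComplexVectors

namespace IsRealHomog

variable {N k : ℕ} {p : EuclideanSpace ℂ (Fin N) → ℂ}

theorem exists_norm_sub_le (hp : IsRealHomog k p) :
    ∃ A, 0 ≤ A ∧ ∀ z, ‖p z - p (cV (vecRe z))‖
      ≤ A * ‖vecIm z‖ * (‖vecRe z‖ + ‖vecIm z‖) ^ (2 * k - 1) := by
  obtain ⟨a, S, hdeg, hp⟩ := hp
  refine ⟨∑ α ∈ S, |a α| * (2 * k), by positivity, fun z => ?_⟩
  rw [hp, hp, ← Finset.sum_sub_distrib, Finset.sum_mul, Finset.sum_mul]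
  refine (norm_sum_le _ _).trans (Finset.sum_le_sum fun α hα => ?_)
  have := norm_prod_pow_sub_prod_pow_vecRe_le z α
  rw [hdeg α hα, Nat.cast_mul, Nat.cast_ofNat] at this
  rw [← mul_sub, norm_mul, norm_real, Real.norm_eq_abs, mul_assoc, mul_assoc, mul_assoc]
  exact mul_le_mul_of_nonneg_left (by simpa [cV, mul_assoc] using this) (abs_nonneg _)

theorem exists_re_lower_bound (hp : IsRealHomog k p) (hk : k ≠ 0) {c : ℝ} (hc : 0 < c)
    (hlow : ∀ x, c * ‖x‖ ^ (2 * k) ≤ (p (cV x)).re) :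
    ∃ D, 0 ≤ D ∧ ∀ z, c / 2 * ‖vecRe z‖ ^ (2 * k) - D * ‖vecIm z‖ ^ (2 * k) ≤ (p z).re := by
  obtain ⟨A, hA, hpA⟩ := hp.exists_norm_sub_le
  obtain ⟨D, hD, hyoung⟩ := exists_mul_mul_add_pow_le (2 * k - 1) hA (half_pos hc)
  rw [Nat.sub_add_cancel (by omega)] at hyoung
  refine ⟨D, hD, fun z => ?_⟩
  have hre : (p (cV (vecRe z))).re - (p z).re ≤ ‖p z - p (cV (vecRe z))‖ := by
    rw [← norm_neg, neg_sub, ← sub_re]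
    exact re_le_norm _
  linarith [hlow (vecRe z), hpA z, hyoung _ _ (norm_nonneg (vecRe z)) (norm_nonneg (vecIm z))]

end IsRealHomog

theorem integrable_exp_neg_mul_norm_pow {E : Type*} [NormedAddCommGroup E] [NormedSpace ℝ E]
    [FiniteDimensional ℝ E] [MeasurableSpace E] [BorelSpace E] [Nontrivial E]
    (μ : Measure E) [μ.IsAddHaarMeasure] {b : ℝ} (hb : 0 < b) {n : ℕ} (hn : n ≠ 0) :
    Integrable (fun x : E => Real.exp (-(b * ‖x‖ ^ n))) μ := by
  refine (integrable_fun_norm_addHaar μ (f := fun r => Real.exp (-(b * r ^ n)))).2 ?_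
  refine (integrableOn_rpow_mul_exp_neg_mul_rpow (s := (Module.finrank ℝ E - 1 : ℕ))
    (neg_one_lt_zero.trans_le (Nat.cast_nonneg _)) (Nat.cast_pos.2 (Nat.pos_of_ne_zero hn))
    hb).congr_fun (fun r _ => ?_) measurableSet_Ioi
  simp [Real.rpow_natCast]

theorem lintegral_comp_smul_sub {E : Type*} [NormedAddCommGroup E] [NormedSpace ℝ E]
    [FiniteDimensional ℝ E] [MeasurableSpace E] [BorelSpace E]
    (μ : Measure E) [μ.IsAddHaarMeasure] (f : E → ℝ≥0∞) {t : ℝ} (ht : t ≠ 0) (u : E) :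
    ∫⁻ x, f (t • (x - u)) ∂μ = ENNReal.ofReal |(t ^ Module.finrank ℝ E)⁻¹| * ∫⁻ x, f x ∂μ := by
  have hmap := lintegral_map_equiv (μ := μ) f (MeasurableEquiv.smul₀ t ht)
  rw [MeasurableEquiv.coe_smul₀] at hmap
  rw [lintegral_sub_right_eq_self (fun x => f (t • x)) u, ← hmap,
    Measure.map_addHaar_smul μ ht, lintegral_smul_measure, smul_eq_mul]

theorem lintegral_nnnorm_smul_sub_cV_mul_le {N : ℕ} {p Ψ : EuclideanSpace ℂ (Fin N) → ℂ} {cp : ℝ}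
    (hcp : 0 ≤ cp) (hΨ : ∀ z, Ψ z = (cp : ℂ) * Complex.exp (-(p z))) {m : ℕ} {b D : ℝ}
    (hD : 0 ≤ D) (hre : ∀ z, b * ‖vecRe z‖ ^ m - D * ‖vecIm z‖ ^ m ≤ (p z).re)
    {δ : ℝ} {w : EuclideanSpace ℂ (Fin N)} (hw : ‖vecIm w‖ ≤ δ) {t : ℝ} (ht : 0 < t) :
    ∫⁻ τ, (‖Ψ (t • (cV τ - w))‖₊ : ℝ≥0∞) * ENNReal.ofReal (t ^ N)
      ≤ ENNReal.ofReal (cp * Real.exp (D * δ ^ m * t ^ m))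
        * ∫⁻ x : EuclideanSpace ℝ (Fin N), ENNReal.ofReal (Real.exp (-(b * ‖x‖ ^ m))) := by
  have hpt : ∀ τ, ‖Ψ (t • (cV τ - w))‖ ≤ cp * Real.exp (D * δ ^ m * t ^ m)
      * Real.exp (-(b * ‖t • (τ - vecRe w)‖ ^ m)) := fun τ => by
    have := hre (t • (cV τ - w))
    rw [vecRe_smul_sub_cV, vecIm_smul_sub_cV, norm_neg, norm_smul t (vecIm w),
      Real.norm_of_nonneg ht.le, mul_pow] at this
    have hδ : ‖vecIm w‖ ^ m ≤ δ ^ m := pow_le_pow_left₀ (norm_nonneg _) hw m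
    rw [hΨ, norm_mul, norm_real, Real.norm_of_nonneg hcp, norm_exp, neg_re, mul_assoc,
      ← Real.exp_add]
    gcongr
    nlinarith [mul_le_mul_of_nonneg_left hδ (mul_nonneg hD (pow_nonneg ht.le m))]
  calc ∫⁻ τ, (‖Ψ (t • (cV τ - w))‖₊ : ℝ≥0∞) * ENNReal.ofReal (t ^ N)
      ≤ ∫⁻ τ, ENNReal.ofReal (cp * Real.exp (D * δ ^ m * t ^ m)) * ENNReal.ofReal (t ^ N)
          * ENNReal.ofReal (Real.exp (-(b * ‖t • (τ - vecRe w)‖ ^ m))) := by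
        refine lintegral_mono fun τ => ?_
        rw [mul_right_comm, ← ENNReal.ofReal_mul (by positivity), ← enorm_eq_nnnorm, ← ofReal_norm]
        gcongr
        exact hpt τ
    _ = _ := by
        rw [lintegral_const_mul' _ _ (by finiteness), lintegral_comp_smul_sub _
          (fun x => ENNReal.ofReal (Real.exp (-(b * ‖x‖ ^ m)))) ht.ne', finrank_euclideanSpace_fin,
          mul_assoc, ← mul_assoc (ENNReal.ofReal (t ^ N)), ← ENNReal.ofReal_mul (by positivity),
          abs_of_pos (by positivity), mul_inv_cancel₀ (by positivity), ENNReal.ofReal_one, one_mul]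

theorem ofReal_exp_neg_mul_sq_mul_lintegral_le {α E : Type*} [MeasurableSpace α] {μ : Measure α}
    [NormedAddCommGroup E] {F : ℝ → α → ℝ≥0∞} {N m : ℕ} (hN : N ≠ 0) {lam : ℝ} (hlam : 0 < lam)
    {B C ε cp : ℝ} (hcp : 0 ≤ cp) {I : ℝ≥0∞}
    (hF : ∀ t : ℝ, 0 < t →
      ∫⁻ τ, F t τ * ENNReal.ofReal (t ^ N) ∂μ ≤ ENNReal.ofReal (cp * Real.exp (B * t ^ m)) * I)
    (hB : ∀ s : ℝ, 0 ≤ s → B * s ^ (m * lam) ≤ ε / 2 * s ^ 2 + C) (ξ : E) :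
    ENNReal.ofReal (Real.exp (-ε * ‖ξ‖ ^ 2)) * ∫⁻ τ, F (‖ξ‖ ^ lam) τ
        * ENNReal.ofReal (‖ξ‖ ^ (lam * N)) ∂μ
      ≤ ENNReal.ofReal (cp * Real.exp C) * I * ENNReal.ofReal (Real.exp (-(ε / 2 * ‖ξ‖ ^ 2))) := by
  rcases eq_or_ne ξ 0 with rfl | hξ
  · have hNlam : lam * N ≠ 0 := mul_ne_zero hlam.ne' (Nat.cast_ne_zero.2 hN)
    simp [Real.zero_rpow hNlam]
  set t := ‖ξ‖ ^ lam
  have ht : 0 < t := Real.rpow_pos_of_pos (norm_pos_iff.2 hξ) lam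
  have htN : ‖ξ‖ ^ (lam * N) = t ^ N := by rw [Real.rpow_mul (norm_nonneg ξ), Real.rpow_natCast]
  have htm : t ^ m = ‖ξ‖ ^ (m * lam) := by
    rw [mul_comm, Real.rpow_mul (norm_nonneg ξ), Real.rpow_natCast]
  have hweight : Real.exp (-ε * ‖ξ‖ ^ 2) * (cp * Real.exp (B * t ^ m))
      ≤ cp * Real.exp C * Real.exp (-(ε / 2 * ‖ξ‖ ^ 2)) := by
    have hexp : -ε * ‖ξ‖ ^ 2 + B * t ^ m ≤ C + -(ε / 2 * ‖ξ‖ ^ 2) := by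
      linarith [htm ▸ hB ‖ξ‖ (norm_nonneg ξ)]
    calc Real.exp (-ε * ‖ξ‖ ^ 2) * (cp * Real.exp (B * t ^ m))
        = cp * Real.exp (-ε * ‖ξ‖ ^ 2 + B * t ^ m) := by rw [Real.exp_add]; ring
      _ ≤ cp * Real.exp (C + -(ε / 2 * ‖ξ‖ ^ 2)) := by gcongr
      _ = cp * Real.exp C * Real.exp (-(ε / 2 * ‖ξ‖ ^ 2)) := by rw [Real.exp_add]; ring
  calc ENNReal.ofReal (Real.exp (-ε * ‖ξ‖ ^ 2)) * ∫⁻ τ, F t τ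
        * ENNReal.ofReal (‖ξ‖ ^ (lam * N)) ∂μ
      ≤ ENNReal.ofReal (Real.exp (-ε * ‖ξ‖ ^ 2))
          * (ENNReal.ofReal (cp * Real.exp (B * t ^ m)) * I) := by
        rw [htN]; gcongr; exact hF t ht
    _ ≤ ENNReal.ofReal (cp * Real.exp C * Real.exp (-(ε / 2 * ‖ξ‖ ^ 2))) * I := by
        rw [← mul_assoc, ← ENNReal.ofReal_mul (Real.exp_nonneg _)]
        gcongr
    _ = _ := by rw [ENNReal.ofReal_mul (by positivity), mul_right_comm]

theorem stmt2_general (N k : ℕ) (hN : 1 ≤ N) (hk : 1 ≤ k)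
    (p : EuclideanSpace ℂ (Fin N) → ℂ) (hp : IsRealHomog k p)
    (c : ℝ) (hc : 0 < c)
    (hlow : ∀ x : EuclideanSpace ℝ (Fin N), c * ‖x‖ ^ (2 * k) ≤ (p (cV x)).re)
    (cp : ℝ) (hcp : 0 < cp)
    (Ψ : EuclideanSpace ℂ (Fin N) → ℂ)
    (hΨ : ∀ z, Ψ z = (cp : ℂ) * Complex.exp (-(p z)))
    (lam : ℝ) (hlam : lam ∈ Set.Ioo (0 : ℝ) (1 / (k : ℝ))) :
    ∀ K : Set (EuclideanSpace ℝ (Fin N)), IsCompact K →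
      ∀ δ > (0 : ℝ), ∀ ε ∈ Set.Ioo (0 : ℝ) 1, ∃ M > (0 : ℝ),
        ∀ w ∈ Metric.thickening δ (cV '' K),
          (∫⁻ ξ : EuclideanSpace ℝ (Fin N),
              ENNReal.ofReal (Real.exp (-ε * ‖ξ‖ ^ 2)) *
                ∫⁻ τ : EuclideanSpace ℝ (Fin N),
                  (‖Ψ ((‖ξ‖ ^ lam) • (cV τ - w))‖₊ : ℝ≥0∞) *
                    ENNReal.ofReal (‖ξ‖ ^ (lam * N))) < ENNReal.ofReal M := by
  intro K _ δ hδ ε ⟨hε, _⟩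
  obtain ⟨hlam₀, hlamk⟩ := hlam
  have : Nonempty (Fin N) := ⟨⟨0, hN⟩⟩
  obtain ⟨D, hD, hre⟩ := hp.exists_re_lower_bound (by omega) hc hlow
  have ha : ((2 * k : ℕ) : ℝ) * lam < 2 := by
    rw [lt_div_iff₀' (by positivity)] at hlamk
    push_cast; linarith
  obtain ⟨E, hE⟩ := exists_mul_rpow_le (by positivity) ha
    (mul_nonneg hD (pow_nonneg hδ.le (2 * k))) (half_pos hε)
  set I := ∫⁻ x : EuclideanSpace ℝ (Fin N), ENNReal.ofReal (Real.exp (-(c / 2 * ‖x‖ ^ (2 * k))))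
  set G := ∫⁻ ξ : EuclideanSpace ℝ (Fin N), ENNReal.ofReal (Real.exp (-(ε / 2 * ‖ξ‖ ^ 2)))
  have hI : I ≠ ⊤ :=
    (integrable_exp_neg_mul_norm_pow volume (half_pos hc) (by omega)).lintegral_lt_top.ne
  have hG : G ≠ ⊤ :=
    (integrable_exp_neg_mul_norm_pow volume (half_pos hε) two_ne_zero).lintegral_lt_top.ne
  set T := ENNReal.ofReal (cp * Real.exp E) * I * G
  have hT : T ≠ ⊤ := by finiteness
  refine ⟨T.toReal + 1, by positivity, fun w hw => ?_⟩
  have hinner := fun t (ht : 0 < t) => lintegral_nnnorm_smul_sub_cV_mul_le hcp.le hΨ hD hre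
    (norm_vecIm_lt_of_mem_thickening hw).le ht
  calc _ ≤ ∫⁻ ξ : EuclideanSpace ℝ (Fin N), ENNReal.ofReal (cp * Real.exp E) * I
          * ENNReal.ofReal (Real.exp (-(ε / 2 * ‖ξ‖ ^ 2))) :=
        lintegral_mono fun ξ =>
          ofReal_exp_neg_mul_sq_mul_lintegral_le (by omega) hlam₀ hcp.le hinner hE ξ
    _ = T := lintegral_const_mul' _ _ (by finiteness)
    _ < ENNReal.ofReal (T.toReal + 1) := (ENNReal.lt_ofReal_iff_toReal_lt hT).2 (lt_add_one _)

/-- Integrability condition (property (1) of a good phase function) for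
`Ψ(z) = c_p e^{-p(z)}` and `λ ∈ (0, 1/k)`. -/
theorem stmt2 (N k : ℕ) (hN : 1 ≤ N) (hk : 1 ≤ k)
    (p : EuclideanSpace ℂ (Fin N) → ℂ) (hp : IsRealHomog k p)
    (c C : ℝ) (hc : 0 < c) (hC : 0 < C)
    (hlow : ∀ x : EuclideanSpace ℝ (Fin N), c * ‖x‖ ^ (2 * k) ≤ (p (cV x)).re)
    (hupp : ∀ x : EuclideanSpace ℝ (Fin N), (p (cV x)).re ≤ C * ‖x‖ ^ (2 * k))
    (cp : ℝ) (hcp : 0 < cp)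
    (hcpdef : cp⁻¹ = ∫ x : EuclideanSpace ℝ (Fin N), Real.exp (-(p (cV x)).re))
    (Ψ : EuclideanSpace ℂ (Fin N) → ℂ)
    (hΨ : ∀ z, Ψ z = (cp : ℂ) * Complex.exp (-(p z)))
    (lam : ℝ) (hlam : lam ∈ Set.Ioo (0 : ℝ) (1 / (k : ℝ))) :
    ∀ K : Set (EuclideanSpace ℝ (Fin N)), IsCompact K →
      ∀ δ > (0 : ℝ), ∀ ε ∈ Set.Ioo (0 : ℝ) 1, ∃ M > (0 : ℝ),
        ∀ w ∈ Metric.thickening δ (cV '' K),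
          (∫⁻ ξ : EuclideanSpace ℝ (Fin N),
              ENNReal.ofReal (Real.exp (-ε * ‖ξ‖ ^ 2)) *
                ∫⁻ τ : EuclideanSpace ℝ (Fin N),
                  (‖Ψ ((‖ξ‖ ^ lam) • (cV τ - w))‖₊ : ℝ≥0∞) *
                    ENNReal.ofReal (‖ξ‖ ^ (lam * N))) < ENNReal.ofReal M :=
  stmt2_general N k hN hk p hp c hc hlow cp hcp Ψ hΨ lam hlam

end
end

section
/- Let p, c_p be as above, and let ρ > 0 and c′ > 0 satisfy Re p(z) ≥ c′|z|^{2k} for all z = x + iy ∈ ℂ^N with |y| ≤ ρ|x|. Let K, K′ ⊂ ℝ^N be disjoint compact sets. Then there exist a > 0 and δ > 0 such that for every linear functional μ on the space of entire functions and every constant C > 0 satisfying |μ(h)| ≤ C sup_{z ∈ K_δ} |h(z)| for all entire h, one has |F_p μ(τ, ξ)| ≤ C c_p e^{−a|ξ|} for all τ ∈ K′ and all ξ ∈ ℝ^N. -/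
open MeasureTheory Metric Complex Filter

noncomputable section

/-- The bilinear pairing `z · w = ∑ j, z j * w j` on `ℂ^N`. -/
def dotC {N : ℕ} (z w : EuclideanSpace ℂ (Fin N)) : ℂ := ∑ j, z j * w j

/-! If `d > 0` separates `K` from `K'` and `z` lies within `δ ≤ d/2` of `K`, then for `τ ∈ K'` the
vector `v = τ - z` has `|Im v| < δ` and `|Re v| ≥ d - δ ≥ d/2`, so for `δ ≤ ρ d/2` it lies in the
cone where `Re p(v) ≥ c' |v|^{2k}`.  Hence `|exp(i v·ξ - |ξ| p(v))| ≤ exp((δ - c' (d/2)^{2k}) |ξ|)`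
on `K_δ`, and `δ < c' (d/2)^{2k}` makes the exponent negative. -/

lemma exists_pos_forall_le_dist {α : Type*} [PseudoMetricSpace α] {s t : Set α}
    (hs : IsCompact s) (ht : IsClosed t) (hst : Disjoint s t) :
    ∃ d > 0, ∀ x ∈ s, ∀ y ∈ t, d ≤ dist x y := by
  obtain ⟨r, hr, hlt⟩ := exists_pos_forall_lt_edist hs ht hst
  refine ⟨r, hr, fun x hx y hy => le_of_lt ?_⟩
  have := hlt x hx y hy
  rw [edist_dist, ← ENNReal.ofReal_coe_nnreal] at this
  exact (ENNReal.ofReal_lt_ofReal_iff_of_nonneg r.2).mp this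

section ComplexParts

variable {N : ℕ}

lemma norm_reV_le (u : EuclideanSpace ℂ (Fin N)) : ‖reV u‖ ≤ ‖u‖ := by
  rw [EuclideanSpace.norm_eq, EuclideanSpace.norm_eq]
  refine Real.sqrt_le_sqrt (Finset.sum_le_sum fun j _ => pow_le_pow_left₀ (norm_nonneg _) ?_ 2)
  simpa [reV, Real.norm_eq_abs] using Complex.abs_re_le_norm (u j)

lemma norm_imV_le (u : EuclideanSpace ℂ (Fin N)) : ‖imV u‖ ≤ ‖u‖ := by
  rw [EuclideanSpace.norm_eq, EuclideanSpace.norm_eq]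
  refine Real.sqrt_le_sqrt (Finset.sum_le_sum fun j _ => pow_le_pow_left₀ (norm_nonneg _) ?_ 2)
  simpa [imV, Real.norm_eq_abs] using Complex.abs_im_le_norm (u j)

lemma reV_sub (u v : EuclideanSpace ℂ (Fin N)) : reV (u - v) = reV u - reV v := by
  ext j; simp [reV]

lemma imV_sub (u v : EuclideanSpace ℂ (Fin N)) : imV (u - v) = imV u - imV v := by
  ext j; simp [imV]

@[simp]
lemma reV_cV (x : EuclideanSpace ℝ (Fin N)) : reV (cV x) = x := by
  ext j; simp [reV, cV]

@[simp]
lemma imV_cV (x : EuclideanSpace ℝ (Fin N)) : imV (cV x) = 0 := by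
  ext j; simp [imV, cV]

lemma re_I_mul_dotC_cV_le (v : EuclideanSpace ℂ (Fin N)) (ξ : EuclideanSpace ℝ (Fin N)) :
    (Complex.I * dotC v (cV ξ)).re ≤ ‖imV v‖ * ‖ξ‖ :=
  calc (Complex.I * dotC v (cV ξ)).re = inner ℝ (-imV v) ξ := by
        simp [dotC, PiLp.inner_apply, Complex.re_sum, cV, imV, mul_comm]
    _ ≤ ‖-imV v‖ * ‖ξ‖ := real_inner_le_norm _ _
    _ = ‖imV v‖ * ‖ξ‖ := by rw [norm_neg]

lemma norm_imV_sub_le (τ x : EuclideanSpace ℝ (Fin N)) (z : EuclideanSpace ℂ (Fin N)) :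
    ‖imV (cV τ - z)‖ ≤ ‖z - cV x‖ := by
  calc ‖imV (cV τ - z)‖ = ‖imV (z - cV x)‖ := by
        rw [imV_sub, imV_sub, imV_cV, imV_cV, zero_sub, sub_zero, norm_neg]
    _ ≤ ‖z - cV x‖ := norm_imV_le _

lemma norm_sub_sub_le_norm_reV_sub (τ x : EuclideanSpace ℝ (Fin N))
    (z : EuclideanSpace ℂ (Fin N)) : ‖τ - x‖ - ‖z - cV x‖ ≤ ‖reV (cV τ - z)‖ := by
  have hzx : ‖reV z - x‖ ≤ ‖z - cV x‖ := by
    simpa only [reV_sub, reV_cV] using norm_reV_le (z - cV x)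
  have := norm_sub_le_norm_sub_add_norm_sub τ (reV z) x
  rw [reV_sub, reV_cV]
  linarith

end ComplexParts

lemma IsRealHomog.differentiable {N k : ℕ} {p : EuclideanSpace ℂ (Fin N) → ℂ}
    (hp : IsRealHomog k p) : Differentiable ℂ p := by
  obtain ⟨a, S, -, hrep⟩ := hp
  rw [funext hrep]
  fun_prop

/-- The entire function `w ↦ exp(i (τ - w)·ξ - |ξ| p(τ - w))` on which `μ` is evaluated in
`F_p μ(τ, ξ)`. -/
def fbiKernel {N : ℕ} (p : EuclideanSpace ℂ (Fin N) → ℂ) (τ ξ : EuclideanSpace ℝ (Fin N))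
    (w : EuclideanSpace ℂ (Fin N)) : ℂ :=
  Complex.exp (Complex.I * dotC (cV τ - w) (cV ξ) - (‖ξ‖ : ℂ) * p (cV τ - w))

section FbiKernel

variable {N : ℕ} {p : EuclideanSpace ℂ (Fin N) → ℂ}

lemma differentiable_fbiKernel (hp : Differentiable ℂ p) (τ ξ : EuclideanSpace ℝ (Fin N)) :
    Differentiable ℂ (fbiKernel p τ ξ) := by
  unfold fbiKernel dotC
  fun_prop

lemma norm_fbiKernel_le (τ ξ : EuclideanSpace ℝ (Fin N)) (w : EuclideanSpace ℂ (Fin N)) :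
    ‖fbiKernel p τ ξ w‖ ≤ Real.exp ((‖imV (cV τ - w)‖ - (p (cV τ - w)).re) * ‖ξ‖) := by
  rw [fbiKernel, Complex.norm_exp, Real.exp_le_exp, Complex.sub_re, Complex.re_ofReal_mul]
  linarith [re_I_mul_dotC_cV_le (cV τ - w) ξ]

/-- `τ - z` lies in the cone `|Im| ≤ ρ |Re|` (as `δ ≤ ρ r`) and has norm at least `r`. -/
lemma norm_fbiKernel_le_of_cone {ρ c' : ℝ} {k : ℕ} (hρ : 0 ≤ ρ) (hc' : 0 ≤ c')
    (hcone : ∀ z : EuclideanSpace ℂ (Fin N),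
      ‖imV z‖ ≤ ρ * ‖reV z‖ → c' * ‖z‖ ^ (2 * k) ≤ (p z).re)
    {τ x ξ : EuclideanSpace ℝ (Fin N)} {z : EuclideanSpace ℂ (Fin N)} {r δ : ℝ}
    (hr : 0 ≤ r) (hδρ : δ ≤ ρ * r) (hzx : ‖z - cV x‖ ≤ δ) (hτx : r + δ ≤ ‖τ - x‖) :
    ‖fbiKernel p τ ξ z‖ ≤ Real.exp (-(c' * r ^ (2 * k) - δ) * ‖ξ‖) := by
  set v := cV τ - z
  have him : ‖imV v‖ ≤ δ := (norm_imV_sub_le τ x z).trans hzx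
  have hre : r ≤ ‖reV v‖ := by linarith [norm_sub_sub_le_norm_reV_sub τ x z]
  have hpv : c' * r ^ (2 * k) ≤ (p v).re := by
    refine le_trans ?_ (hcone v (him.trans (hδρ.trans (mul_le_mul_of_nonneg_left hre hρ))))
    exact mul_le_mul_of_nonneg_left (pow_le_pow_left₀ hr (hre.trans (norm_reV_le v)) _) hc'
  refine (norm_fbiKernel_le τ ξ z).trans (Real.exp_le_exp.mpr ?_)
  exact mul_le_mul_of_nonneg_right (by linarith) (norm_nonneg _)

lemma sSup_norm_fbiKernel_thickening_le {ρ c' : ℝ} {k : ℕ} (hρ : 0 ≤ ρ) (hc' : 0 ≤ c')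
    (hcone : ∀ z : EuclideanSpace ℂ (Fin N),
      ‖imV z‖ ≤ ρ * ‖reV z‖ → c' * ‖z‖ ^ (2 * k) ≤ (p z).re)
    {K : Set (EuclideanSpace ℝ (Fin N))} {τ ξ : EuclideanSpace ℝ (Fin N)} {r δ : ℝ}
    (hr : 0 ≤ r) (hδρ : δ ≤ ρ * r) (hsep : ∀ x ∈ K, r + δ ≤ dist x τ) :
    sSup ((fun z => ‖fbiKernel p τ ξ z‖) '' thickening δ (cV '' K)) ≤
      Real.exp (-(c' * r ^ (2 * k) - δ) * ‖ξ‖) := by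
  refine Real.sSup_le ?_ (Real.exp_pos _).le
  rintro _ ⟨z, hz, rfl⟩
  obtain ⟨_, ⟨x, hxK, rfl⟩, hzx⟩ := mem_thickening_iff.mp hz
  refine norm_fbiKernel_le_of_cone hρ hc' hcone hr hδρ (dist_eq_norm z (cV x) ▸ hzx).le ?_
  simpa only [dist_comm x τ, dist_eq_norm] using hsep x hxK

end FbiKernel

theorem stmt8_general (N k : ℕ)
    (p : EuclideanSpace ℂ (Fin N) → ℂ) (hp : IsRealHomog k p)
    (cp : ℝ) (hcp : 0 < cp)
    (ρ c' : ℝ) (hρ : 0 < ρ) (hc' : 0 < c')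
    (hcone : ∀ z : EuclideanSpace ℂ (Fin N),
      ‖imV z‖ ≤ ρ * ‖reV z‖ → c' * ‖z‖ ^ (2 * k) ≤ (p z).re)
    (K K' : Set (EuclideanSpace ℝ (Fin N))) (hK : IsCompact K) (hK' : IsCompact K')
    (hdisj : Disjoint K K') :
    ∃ a > (0 : ℝ), ∃ δ > (0 : ℝ),
      ∀ (μ : (EuclideanSpace ℂ (Fin N) → ℂ) →ₗ[ℂ] ℂ) (Cμ : ℝ), 0 < Cμ →
        (∀ h : EuclideanSpace ℂ (Fin N) → ℂ, Differentiable ℂ h →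
          ‖μ h‖ ≤ Cμ * sSup ((fun z => ‖h z‖) '' Metric.thickening δ (cV '' K))) →
        ∀ τ ∈ K', ∀ ξ : EuclideanSpace ℝ (Fin N),
          ‖(cp : ℂ) * μ (fun w => Complex.exp
              (Complex.I * dotC (cV τ - w) (cV ξ) - (‖ξ‖ : ℂ) * p (cV τ - w)))‖ ≤
            Cμ * cp * Real.exp (-a * ‖ξ‖) := by
  obtain ⟨d, hd, hsep⟩ := exists_pos_forall_le_dist hK hK'.isClosed hdisj
  set r := d / 2 with hr_def
  have hr : 0 < r := half_pos hd
  set δ := min (min r (ρ * r)) (c' * r ^ (2 * k) / 2)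
  have hδ : 0 < δ := lt_min (lt_min hr (mul_pos hρ hr)) (by positivity)
  have hδr : δ ≤ r := (min_le_left _ _).trans (min_le_left _ _)
  have hδρ : δ ≤ ρ * r := (min_le_left _ _).trans (min_le_right _ _)
  have ha : 0 < c' * r ^ (2 * k) - δ := by
    linarith [min_le_right (min r (ρ * r)) (c' * r ^ (2 * k) / 2)]
  refine ⟨_, ha, δ, hδ, fun μ Cμ hCμ hμ τ hτ ξ => ?_⟩
  have hsup := sSup_norm_fbiKernel_thickening_le (ξ := ξ) hρ.le hc'.le hcone hr.le hδρ
    fun x hx => by linarith [hsep x hx τ hτ]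
  calc ‖(cp : ℂ) * μ (fbiKernel p τ ξ)‖ = cp * ‖μ (fbiKernel p τ ξ)‖ := by
        rw [norm_mul, Complex.norm_real, Real.norm_of_nonneg hcp.le]
    _ ≤ cp * (Cμ * Real.exp (-(c' * r ^ (2 * k) - δ) * ‖ξ‖)) :=
        mul_le_mul_of_nonneg_left ((hμ _ (differentiable_fbiKernel hp.differentiable τ ξ)).trans
          (mul_le_mul_of_nonneg_left hsup hCμ.le)) hcp.le
    _ = Cμ * cp * Real.exp (-(c' * r ^ (2 * k) - δ) * ‖ξ‖) := by ring

/-- Exponential decay of the FBI transform away from the carrier: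
if `μ` is carried by `K_δ` (with the bound constant `C`) and `K, K′` are disjoint
compact sets, then `|F_p μ(τ,ξ)| ≤ C c_p e^{-a|ξ|}` for `τ ∈ K′`. -/
theorem stmt8 (N k : ℕ) (hN : 1 ≤ N) (hk : 1 ≤ k)
    (p : EuclideanSpace ℂ (Fin N) → ℂ) (hp : IsRealHomog k p)
    (c C : ℝ) (hc : 0 < c) (hC : 0 < C)
    (hlow : ∀ x : EuclideanSpace ℝ (Fin N), c * ‖x‖ ^ (2 * k) ≤ (p (cV x)).re)
    (hupp : ∀ x : EuclideanSpace ℝ (Fin N), (p (cV x)).re ≤ C * ‖x‖ ^ (2 * k))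
    (cp : ℝ) (hcp : 0 < cp)
    (hcpdef : cp⁻¹ = ∫ x : EuclideanSpace ℝ (Fin N), Real.exp (-(p (cV x)).re))
    (ρ c' : ℝ) (hρ : 0 < ρ) (hc' : 0 < c')
    (hcone : ∀ z : EuclideanSpace ℂ (Fin N),
      ‖imV z‖ ≤ ρ * ‖reV z‖ → c' * ‖z‖ ^ (2 * k) ≤ (p z).re)
    (K K' : Set (EuclideanSpace ℝ (Fin N))) (hK : IsCompact K) (hK' : IsCompact K')
    (hdisj : Disjoint K K') :
    ∃ a > (0 : ℝ), ∃ δ > (0 : ℝ),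
      ∀ (μ : (EuclideanSpace ℂ (Fin N) → ℂ) →ₗ[ℂ] ℂ) (Cμ : ℝ), 0 < Cμ →
        (∀ h : EuclideanSpace ℂ (Fin N) → ℂ, Differentiable ℂ h →
          ‖μ h‖ ≤ Cμ * sSup ((fun z => ‖h z‖) '' Metric.thickening δ (cV '' K))) →
        ∀ τ ∈ K', ∀ ξ : EuclideanSpace ℝ (Fin N),
          ‖(cp : ℂ) * μ (fun w => Complex.exp
              (Complex.I * dotC (cV τ - w) (cV ξ) - (‖ξ‖ : ℂ) * p (cV τ - w)))‖ ≤
            Cμ * cp * Real.exp (-a * ‖ξ‖) :=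
  stmt8_general N k p hp cp hcp ρ c' hρ hc' hcone K K' hK hK' hdisj
end
end

section
/- Let p, c_p be as above, let U ⊂ ℝ^N be a bounded open set, K′ ⊂ ℝ^N compact, q ∈ ℕ, and let v be a linear functional on C^∞(ℝ^N, ℂ) for which there exists C₀ > 0 with |v(ψ)| ≤ C₀ Σ_{|α| ≤ q} sup_{x ∈ closure(U)} |∂^α ψ(x)| for every ψ ∈ C^∞(ℝ^N, ℂ). Let φ ∈ C_c^∞(ℝ^N) with support contained in U. Then there exists C > 0 such that |c_p · v(x ↦ φ(x) e^{i(τ−x)·ξ − |ξ| p(τ−x)})| ≤ C (1 + |ξ|)^q for all τ ∈ K′ and all ξ ∈ ℝ^N. -/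
open MeasureTheory Metric Complex Filter

noncomputable section

/-- The dot product `x · y = ∑ j, x j * y j` on `ℝ^N`. -/
def dotR {N : ℕ} (x y : EuclideanSpace ℝ (Fin N)) : ℝ := ∑ j, x j * y j

/-- Iterated partial derivative along a list of coordinate directions. -/
def pderivList {N : ℕ} : List (Fin N) → (EuclideanSpace ℝ (Fin N) → ℂ) →
    EuclideanSpace ℝ (Fin N) → ℂ
  | [], f => f
  | j :: l, f => fun x => fderiv ℝ (pderivList l f) x (EuclideanSpace.single j 1)

/-- The partial derivative `∂^α` for a multi-index `α : Fin N → ℕ`. -/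
def pderivMulti {N : ℕ} (α : Fin N → ℕ) (f : EuclideanSpace ℝ (Fin N) → ℂ) :
    EuclideanSpace ℝ (Fin N) → ℂ :=
  pderivList ((List.finRange N).flatMap fun j => List.replicate (α j) j) f

namespace Stmt15Aux


abbrev Vr (N : ℕ) := EuclideanSpace ℝ (Fin N)

variable {N : ℕ}

/-- A representation: list of (coefficient in `ξ`, smooth amplitude in `(τ,x)`). -/
abbrev Rep (N : ℕ) := List ((Vr N → ℂ) × (Vr N × Vr N → ℂ))

def Rep.Good (n : ℕ) (L : Rep N) : Prop :=
  ∀ pr ∈ L, ContDiff ℝ (⊤ : ℕ∞) pr.2 ∧ ∀ ξ : Vr N, ‖pr.1 ξ‖ ≤ (1 + ‖ξ‖) ^ n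

def Rep.eval (L : Rep N) (ξ τ x : Vr N) : ℂ :=
  (L.map fun pr => pr.1 ξ * pr.2 (τ, x)).sum

lemma Rep.eval_cons (pr) (L : Rep N) (ξ τ x : Vr N) :
    Rep.eval (pr :: L) ξ τ x = pr.1 ξ * pr.2 (τ, x) + Rep.eval L ξ τ x := by
  simp [Rep.eval]

def Sym (n : ℕ) (P : Vr N → Vr N → Vr N → ℂ) : Prop :=
  ∃ L : Rep N, Rep.Good n L ∧ ∀ ξ τ x, P ξ τ x = Rep.eval L ξ τ x

lemma one_le_one_add_norm (ξ : Vr N) : (1 : ℝ) ≤ 1 + ‖ξ‖ := by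
  have := norm_nonneg ξ; linarith

lemma Rep.Good.mono {n m : ℕ} (hnm : n ≤ m) {L : Rep N} (h : Rep.Good n L) :
    Rep.Good m L := by
  intro pr hpr
  refine ⟨(h pr hpr).1, fun ξ => le_trans ((h pr hpr).2 ξ) ?_⟩
  exact pow_le_pow_right₀ (one_le_one_add_norm ξ) hnm

lemma Sym.mono {n m : ℕ} (hnm : n ≤ m) {P : Vr N → Vr N → Vr N → ℂ}
    (h : Sym n P) : Sym m P := by
  obtain ⟨L, hL, hE⟩ := h
  exact ⟨L, hL.mono hnm, hE⟩

lemma Sym.add {n : ℕ} {P₁ P₂ : Vr N → Vr N → Vr N → ℂ}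
    (h₁ : Sym n P₁) (h₂ : Sym n P₂) :
    Sym n (fun ξ τ x => P₁ ξ τ x + P₂ ξ τ x) := by
  obtain ⟨L₁, hL₁, hE₁⟩ := h₁
  obtain ⟨L₂, hL₂, hE₂⟩ := h₂
  refine ⟨L₁ ++ L₂, ?_, ?_⟩
  · intro pr hpr
    rcases List.mem_append.1 hpr with h | h
    exacts [hL₁ pr h, hL₂ pr h]
  · intro ξ τ x
    simp only [Rep.eval, List.map_append, List.sum_append]
    rw [hE₁, hE₂]; rfl

lemma Rep.eval_mul (L₁ L₂ : Rep N) (ξ τ x : Vr N) :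
    Rep.eval (L₁.flatMap fun p => L₂.map fun r =>
      ((fun ξ => p.1 ξ * r.1 ξ, fun y => p.2 y * r.2 y) :
        (Vr N → ℂ) × (Vr N × Vr N → ℂ))) ξ τ x
      = Rep.eval L₁ ξ τ x * Rep.eval L₂ ξ τ x := by
  induction L₁ with
  | nil => simp [Rep.eval]
  | cons p L ih =>
    rw [List.flatMap_cons, Rep.eval_cons]
    simp only [Rep.eval, List.map_append, List.sum_append] at ih ⊢
    rw [add_mul, ih]
    congr 1
    rw [List.map_map]
    have : ((fun pr : (Vr N → ℂ) × (Vr N × Vr N → ℂ) => pr.1 ξ * pr.2 (τ, x)) ∘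
        fun r : (Vr N → ℂ) × (Vr N × Vr N → ℂ) =>
          ((fun ξ => p.1 ξ * r.1 ξ, fun y => p.2 y * r.2 y) :
            (Vr N → ℂ) × (Vr N × Vr N → ℂ)))
        = fun r : (Vr N → ℂ) × (Vr N × Vr N → ℂ) =>
            (p.1 ξ * p.2 (τ, x)) * (r.1 ξ * r.2 (τ, x)) := by
      funext r; simp only [Function.comp]; ring
    rw [this, List.sum_map_mul_left]

lemma Sym.mul {n m : ℕ} {P₁ P₂ : Vr N → Vr N → Vr N → ℂ}
    (h₁ : Sym n P₁) (h₂ : Sym m P₂) :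
    Sym (n + m) (fun ξ τ x => P₁ ξ τ x * P₂ ξ τ x) := by
  classical
  obtain ⟨L₁, hL₁, hE₁⟩ := h₁
  obtain ⟨L₂, hL₂, hE₂⟩ := h₂
  refine ⟨L₁.flatMap fun p => L₂.map fun r =>
      (fun ξ => p.1 ξ * r.1 ξ, fun y => p.2 y * r.2 y), ?_, ?_⟩
  · intro pr hpr
    rcases List.mem_flatMap.1 hpr with ⟨p, hp, hpr⟩
    rcases List.mem_map.1 hpr with ⟨r, hr, rfl⟩
    refine ⟨((hL₁ p hp).1).mul ((hL₂ r hr).1), fun ξ => ?_⟩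
    rw [norm_mul, pow_add]
    exact mul_le_mul ((hL₁ p hp).2 ξ) ((hL₂ r hr).2 ξ) (norm_nonneg _)
      (by positivity)
  · intro ξ τ x
    show P₁ ξ τ x * P₂ ξ τ x = _
    rw [hE₁, hE₂, Rep.eval_mul]

-- smoothness of eval in x
lemma eval_contDiff (L : Rep N) (hL : ∀ pr ∈ L, ContDiff ℝ (⊤ : ℕ∞) pr.2) (ξ τ : Vr N) :
    ContDiff ℝ (⊤ : ℕ∞) (fun x => Rep.eval L ξ τ x) := by
  induction L with
  | nil => exact contDiff_const
  | cons pr L ih =>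
    have h1 : ContDiff ℝ (⊤ : ℕ∞) (fun x : Vr N => pr.1 ξ * pr.2 (τ, x)) :=
      contDiff_const.mul ((hL pr (List.mem_cons_self)).comp (contDiff_const.prodMk contDiff_id))
    have h2 := ih (fun r hr => hL r (List.mem_cons_of_mem _ hr))
    have : (fun x => Rep.eval (pr :: L) ξ τ x)
        = fun x => pr.1 ξ * pr.2 (τ, x) + Rep.eval L ξ τ x :=
      funext fun x => Rep.eval_cons pr L ξ τ x
    rw [this]; exact h1.add h2

-- derivative of a single amplitude term
lemma term_hasFDerivAt (u : Vr N × Vr N → ℂ) (hu : ContDiff ℝ (⊤ : ℕ∞) u) (τ x : Vr N) :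
    HasFDerivAt (fun x => u (τ, x))
      ((fderiv ℝ u (τ, x)).comp (ContinuousLinearMap.inr ℝ (Vr N) (Vr N))) x :=
  ((hu.differentiable (by simp) (τ, x)).hasFDerivAt).comp x (hasFDerivAt_prodMk_right τ x)

lemma eval_fderiv_apply (L : Rep N) (hL : ∀ pr ∈ L, ContDiff ℝ (⊤ : ℕ∞) pr.2)
    (ξ τ x : Vr N) (e : Vr N) :
    fderiv ℝ (fun x => Rep.eval L ξ τ x) x e
      = Rep.eval (L.map fun pr =>
          (pr.1, fun y => fderiv ℝ pr.2 y ((0 : Vr N), e))) ξ τ x := by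
  induction L with
  | nil => simp [Rep.eval]
  | cons pr L ih =>
    have hmem := hL pr (List.mem_cons_self)
    have hLrest : ∀ r ∈ L, ContDiff ℝ (⊤ : ℕ∞) r.2 := fun r hr => hL r (List.mem_cons_of_mem _ hr)
    have h1 : HasFDerivAt (fun x : Vr N => pr.1 ξ * pr.2 (τ, x))
        (pr.1 ξ • ((fderiv ℝ pr.2 (τ, x)).comp (ContinuousLinearMap.inr ℝ (Vr N) (Vr N)))) x :=
      (term_hasFDerivAt pr.2 hmem τ x).const_mul (pr.1 ξ)
    have h2 : HasFDerivAt (fun x => Rep.eval L ξ τ x)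
        (fderiv ℝ (fun x => Rep.eval L ξ τ x) x) x :=
      ((eval_contDiff L hLrest ξ τ).differentiable (by simp) x).hasFDerivAt
    have hsum : HasFDerivAt (fun x => Rep.eval (pr :: L) ξ τ x)
        (pr.1 ξ • ((fderiv ℝ pr.2 (τ, x)).comp (ContinuousLinearMap.inr ℝ (Vr N) (Vr N)))
          + fderiv ℝ (fun x => Rep.eval L ξ τ x) x) x := by
      have : (fun x => Rep.eval (pr :: L) ξ τ x)
          = fun x => pr.1 ξ * pr.2 (τ, x) + Rep.eval L ξ τ x :=
        funext fun x => Rep.eval_cons pr L ξ τ x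
      rw [this]; exact h1.add h2
    rw [hsum.fderiv]
    simp only [ContinuousLinearMap.add_apply, ContinuousLinearMap.smul_apply,
      ContinuousLinearMap.comp_apply, ContinuousLinearMap.inr_apply, smul_eq_mul]
    rw [ih hLrest]
    simp [Rep.eval_cons]

lemma Sym.contDiff {n : ℕ} {P : Vr N → Vr N → Vr N → ℂ} (h : Sym n P) (ξ τ : Vr N) :
    ContDiff ℝ (⊤ : ℕ∞) (P ξ τ) := by
  obtain ⟨L, hL, hE⟩ := h
  have : P ξ τ = fun x => Rep.eval L ξ τ x := funext fun x => hE ξ τ x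
  rw [this]
  exact eval_contDiff L (fun pr hpr => (hL pr hpr).1) ξ τ

lemma Sym.fderiv {n : ℕ} {P : Vr N → Vr N → Vr N → ℂ} (h : Sym n P) (e : Vr N) :
    Sym n (fun ξ τ x => fderiv ℝ (P ξ τ) x e) := by
  obtain ⟨L, hL, hE⟩ := h
  refine ⟨L.map fun pr => (pr.1, fun y => _root_.fderiv ℝ pr.2 y ((0 : Vr N), e)), ?_, ?_⟩
  · intro pr hpr
    rcases List.mem_map.1 hpr with ⟨r, hr, rfl⟩
    refine ⟨?_, (hL r hr).2⟩
    exact (((hL r hr).1.fderiv_right (m := ((⊤ : ℕ∞) : WithTop ℕ∞)) (by simp)).clm_apply contDiff_const :)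
  · intro ξ τ x
    show _root_.fderiv ℝ (P ξ τ) x e = _
    have : P ξ τ = fun x => Rep.eval L ξ τ x := funext fun x => hE ξ τ x
    rw [this, eval_fderiv_apply L (fun pr hpr => (hL pr hpr).1)]

-- norm bound
lemma eval_norm_le {n : ℕ} (L : Rep N) (hL : Rep.Good n L) (ξ τ x : Vr N) :
    ‖Rep.eval L ξ τ x‖ ≤ (1 + ‖ξ‖) ^ n * (L.map fun pr => ‖pr.2 (τ, x)‖).sum := by
  induction L with
  | nil => simp [Rep.eval]
  | cons pr L ih =>
    have hLrest : Rep.Good n L := fun r hr => hL r (List.mem_cons_of_mem _ hr)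
    rw [Rep.eval_cons]
    refine le_trans (norm_add_le _ _) ?_
    rw [List.map_cons, List.sum_cons, mul_add]
    refine add_le_add ?_ (ih hLrest)
    rw [norm_mul]
    exact mul_le_mul_of_nonneg_right ((hL pr (List.mem_cons_self)).2 ξ) (norm_nonneg _)

lemma amplSum_nonneg (L : Rep N) (y : Vr N × Vr N) :
    0 ≤ (L.map fun pr => ‖pr.2 y‖).sum := by
  refine List.sum_nonneg ?_
  intro a ha
  rcases List.mem_map.1 ha with ⟨r, _, rfl⟩
  exact norm_nonneg _

lemma amplSum_continuous (L : Rep N) (hL : ∀ pr ∈ L, ContDiff ℝ (⊤ : ℕ∞) pr.2) :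
    Continuous (fun y : Vr N × Vr N => (L.map fun pr => ‖pr.2 y‖).sum) := by
  induction L with
  | nil => simpa using continuous_const
  | cons pr L ih =>
    simp only [List.map_cons, List.sum_cons]
    exact ((hL pr (List.mem_cons_self)).continuous.norm).add
      (ih fun r hr => hL r (List.mem_cons_of_mem _ hr))

/-- The CLM `x ↦ ∑ j, ξ j * x j`. -/
noncomputable def Lxi (ξ : Vr N) : Vr N →L[ℝ] ℝ := ∑ j, ξ j • (EuclideanSpace.proj j : Vr N →L[ℝ] ℝ)

lemma Lxi_apply (ξ x : Vr N) : Lxi ξ x = dotR x ξ := by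
  simp [Lxi, dotR, ContinuousLinearMap.sum_apply, PiLp.proj_apply, mul_comm]

lemma Lxi_single (ξ : Vr N) (j : Fin N) : Lxi ξ (EuclideanSpace.single j 1) = ξ j := by
  classical
  simp [Lxi, ContinuousLinearMap.sum_apply, PiLp.proj_apply,
    EuclideanSpace.single_apply]

lemma abs_coord_le_norm (ξ : Vr N) (j : Fin N) : |ξ j| ≤ ‖ξ‖ := by
  classical
  have h := abs_real_inner_le_norm ξ (EuclideanSpace.single j (1:ℝ))
  rw [EuclideanSpace.norm_single] at h
  rw [EuclideanSpace.inner_single_right] at h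
  simpa using h

noncomputable def gfun (Q : Vr N → ℂ) (ξ τ x : Vr N) : ℂ :=
  Complex.I * ((dotR (τ - x) ξ : ℝ) : ℂ) - (‖ξ‖ : ℂ) * Q (τ - x)


variable {Q : Vr N → ℂ}

lemma sub_hasFDerivAt (τ x : Vr N) :
    HasFDerivAt (fun x : Vr N => τ - x) (-(ContinuousLinearMap.id ℝ (Vr N))) x := by
  exact (hasFDerivAt_id (𝕜 := ℝ) (E := Vr N) x).const_sub τ

lemma gfun_hasFDerivAt (hQ : ContDiff ℝ (⊤ : ℕ∞) Q) (ξ τ x : Vr N) :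
    HasFDerivAt (gfun Q ξ τ)
      (Complex.I • ((Complex.ofRealCLM.comp (Lxi ξ)).comp
          (-(ContinuousLinearMap.id ℝ (Vr N))))
        - (‖ξ‖ : ℂ) • ((fderiv ℝ Q (τ - x)).comp (-(ContinuousLinearMap.id ℝ (Vr N))))) x := by
  have hm := sub_hasFDerivAt τ x
  have hA : HasFDerivAt (fun x : Vr N => ((dotR (τ - x) ξ : ℝ) : ℂ))
      ((Complex.ofRealCLM.comp (Lxi ξ)).comp (-(ContinuousLinearMap.id ℝ (Vr N)))) x := by
    have h2 := ((Complex.ofRealCLM.comp (Lxi ξ)).hasFDerivAt).comp x hm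
    have : (fun x : Vr N => ((dotR (τ - x) ξ : ℝ) : ℂ))
        = fun x : Vr N => (Complex.ofRealCLM.comp (Lxi ξ)) (τ - x) := by
      funext y; simp [Lxi_apply]
    rw [this]; exact h2
  have hB : HasFDerivAt (fun x : Vr N => Q (τ - x))
      ((fderiv ℝ Q (τ - x)).comp (-(ContinuousLinearMap.id ℝ (Vr N)))) x :=
    ((hQ.differentiable (by simp) (τ - x)).hasFDerivAt).comp x hm
  exact (hA.const_mul Complex.I).sub (hB.const_mul ((‖ξ‖ : ℝ) : ℂ))

/-- `∂_j` of the phase. -/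
noncomputable def Dg (Q : Vr N → ℂ) (j : Fin N) (ξ τ x : Vr N) : ℂ :=
  -(Complex.I * ((ξ j : ℝ) : ℂ))
    + (‖ξ‖ : ℂ) * fderiv ℝ Q (τ - x) (EuclideanSpace.single j 1)

lemma gfun_fderiv_single (hQ : ContDiff ℝ (⊤ : ℕ∞) Q) (ξ τ x : Vr N) (j : Fin N) :
    fderiv ℝ (gfun Q ξ τ) x (EuclideanSpace.single j 1) = Dg Q j ξ τ x := by
  rw [(gfun_hasFDerivAt hQ ξ τ x).fderiv]
  simp only [ContinuousLinearMap.sub_apply, ContinuousLinearMap.smul_apply,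
    ContinuousLinearMap.comp_apply, ContinuousLinearMap.neg_apply,
    ContinuousLinearMap.id_apply, map_neg, Lxi_single, smul_eq_mul, Dg,
    Complex.ofRealCLM_apply]
  ring

lemma gfun_contDiff (hQ : ContDiff ℝ (⊤ : ℕ∞) Q) (ξ τ : Vr N) :
    ContDiff ℝ (⊤ : ℕ∞) (gfun Q ξ τ) := by
  have hsub : ContDiff ℝ (⊤ : ℕ∞) (fun x : Vr N => τ - x) := contDiff_const.sub contDiff_id
  have h1 : ContDiff ℝ (⊤ : ℕ∞) (fun x : Vr N => ((dotR (τ - x) ξ : ℝ) : ℂ)) := by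
    have : (fun x : Vr N => ((dotR (τ - x) ξ : ℝ) : ℂ))
        = fun x : Vr N => Complex.ofRealCLM (Lxi ξ (τ - x)) := by
      funext y; rw [Lxi_apply]; rfl
    rw [this]
    exact Complex.ofRealCLM.contDiff.comp ((Lxi ξ).contDiff.comp hsub)
  exact (contDiff_const.mul h1).sub (contDiff_const.mul (hQ.comp hsub))

lemma gfun_re_nonpos (hRe : ∀ y : Vr N, 0 ≤ (Q y).re) (ξ τ x : Vr N) :
    (gfun Q ξ τ x).re ≤ 0 := by
  have : (gfun Q ξ τ x).re = -(‖ξ‖ * (Q (τ - x)).re) := by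
    simp [gfun, Complex.sub_re, Complex.mul_re]
  rw [this]
  have := hRe (τ - x)
  have := norm_nonneg ξ
  nlinarith

lemma norm_exp_gfun_le (hRe : ∀ y : Vr N, 0 ≤ (Q y).re) (ξ τ x : Vr N) :
    ‖Complex.exp (gfun Q ξ τ x)‖ ≤ 1 := by
  rw [Complex.norm_exp]
  exact Real.exp_le_one_iff.2 (gfun_re_nonpos hRe ξ τ x)


lemma DgSym (hQ : ContDiff ℝ (⊤ : ℕ∞) Q) (j : Fin N) : Sym 1 (Dg Q j) := by
  refine ⟨[(fun ξ => -(Complex.I * ((ξ j : ℝ) : ℂ)), fun _ => 1),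
      (fun ξ => ((‖ξ‖ : ℝ) : ℂ),
        fun y => _root_.fderiv ℝ Q (y.1 - y.2) (EuclideanSpace.single j 1))], ?_, ?_⟩
  · intro pr hpr
    simp only [List.mem_cons, List.mem_singleton, List.not_mem_nil, or_false] at hpr
    rcases hpr with rfl | rfl
    · refine ⟨contDiff_const, fun ξ => ?_⟩
      simp only [norm_neg, norm_mul, Complex.norm_I, one_mul, Complex.norm_real,
        Real.norm_eq_abs, pow_one]
      exact le_trans (abs_coord_le_norm ξ j) (by linarith [norm_nonneg ξ])
    · refine ⟨?_, fun ξ => ?_⟩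
      · exact ((hQ.fderiv_right (by simp)).comp
          (contDiff_fst.sub contDiff_snd)).clm_apply contDiff_const
      · simp only [Complex.norm_real, Real.norm_eq_abs, abs_norm, pow_one]
        linarith [norm_nonneg ξ]
  · intro ξ τ x
    simp only [Rep.eval, List.map_cons, List.map_nil, List.sum_cons, List.sum_nil, Dg]
    ring_nf

lemma key (φ : Vr N → ℂ) (hφ : ContDiff ℝ (⊤ : ℕ∞) φ) (hQ : ContDiff ℝ (⊤ : ℕ∞) Q)
    (l : List (Fin N)) :
    ∃ P : Vr N → Vr N → Vr N → ℂ, Sym l.length P ∧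
      ∀ ξ τ x, pderivList l (fun x => φ x * Complex.exp (gfun Q ξ τ x)) x
        = P ξ τ x * Complex.exp (gfun Q ξ τ x) := by
  induction l with
  | nil =>
    refine ⟨fun _ _ x => φ x, ⟨[(fun _ => 1, fun y => φ y.2)], ?_, ?_⟩, fun ξ τ x => rfl⟩
    · intro pr hpr
      simp only [List.mem_singleton] at hpr
      subst hpr
      exact ⟨hφ.comp contDiff_snd, fun ξ => by
        simpa using one_le_one_add_norm ξ⟩
    · intro ξ τ x; simp [Rep.eval]
  | cons j l ih =>
    obtain ⟨P, hSym, hEq⟩ := ih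
    refine ⟨fun ξ τ x => _root_.fderiv ℝ (P ξ τ) x (EuclideanSpace.single j 1)
        + P ξ τ x * Dg Q j ξ τ x, ?_, ?_⟩
    · have h1 : Sym (l.length + 1)
          (fun ξ τ x => _root_.fderiv ℝ (P ξ τ) x (EuclideanSpace.single j 1)) :=
        (hSym.fderiv (EuclideanSpace.single j 1)).mono (Nat.le_succ _)
      have h2 : Sym (l.length + 1) (fun ξ τ x => P ξ τ x * Dg Q j ξ τ x) :=
        hSym.mul (DgSym hQ j)
      simpa using h1.add h2
    · intro ξ τ x
      show _root_.fderiv ℝ (pderivList l _) x _ = _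
      have hfun : pderivList l (fun x => φ x * Complex.exp (gfun Q ξ τ x))
          = fun x => P ξ τ x * Complex.exp (gfun Q ξ τ x) := funext (hEq ξ τ)
      rw [hfun]
      have hPd : HasFDerivAt (P ξ τ) (_root_.fderiv ℝ (P ξ τ) x) x :=
        ((hSym.contDiff ξ τ).differentiable (by simp) x).hasFDerivAt
      have hgd := gfun_hasFDerivAt hQ ξ τ x
      have hE := hgd.cexp
      have hprod := hPd.fun_mul hE
      rw [hprod.fderiv]
      simp only [ContinuousLinearMap.add_apply, ContinuousLinearMap.smul_apply,
        smul_eq_mul]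
      have := gfun_fderiv_single hQ ξ τ x j
      rw [(gfun_hasFDerivAt hQ ξ τ x).fderiv] at this
      rw [this]
      ring

lemma contDiff_prod_pow (α : Fin N → ℕ) :
    ContDiff ℝ (⊤ : ℕ∞) (fun y : Vr N => ∏ j, ((y j : ℝ) : ℂ) ^ (α j)) := by
  classical
  have H : ∀ s : Finset (Fin N),
      ContDiff ℝ (⊤ : ℕ∞) (fun y : Vr N => ∏ j ∈ s, ((y j : ℝ) : ℂ) ^ (α j)) := by
    intro s
    induction s using Finset.induction_on with
    | empty => simpa using contDiff_const
    | @insert a s hj ih =>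
      simp only [Finset.prod_insert hj]
      exact (((Complex.ofRealCLM.contDiff).comp
        (EuclideanSpace.proj a : Vr N →L[ℝ] ℝ).contDiff).pow _).mul ih
  exact H Finset.univ

end Stmt15Aux

/-- Polynomial bound for the FBI transform of a compactly supported
distribution of order `q`. -/
theorem stmt15 (N k : ℕ) (hN : 1 ≤ N) (hk : 1 ≤ k)
    (p : EuclideanSpace ℂ (Fin N) → ℂ) (hp : IsRealHomog k p)
    (c C : ℝ) (hc : 0 < c) (hC : 0 < C)
    (hlow : ∀ x : EuclideanSpace ℝ (Fin N), c * ‖x‖ ^ (2 * k) ≤ (p (cV x)).re)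
    (hupp : ∀ x : EuclideanSpace ℝ (Fin N), (p (cV x)).re ≤ C * ‖x‖ ^ (2 * k))
    (cp : ℝ) (hcp : 0 < cp)
    (hcpdef : cp⁻¹ = ∫ x : EuclideanSpace ℝ (Fin N), Real.exp (-(p (cV x)).re))
    (U : Set (EuclideanSpace ℝ (Fin N))) (hUopen : IsOpen U)
    (hUbdd : Bornology.IsBounded U)
    (K' : Set (EuclideanSpace ℝ (Fin N))) (hK' : IsCompact K') (q : ℕ)
    (v : (EuclideanSpace ℝ (Fin N) → ℂ) →ₗ[ℂ] ℂ)
    (hv : ∃ C₀ > (0 : ℝ), ∀ ψ : EuclideanSpace ℝ (Fin N) → ℂ, ContDiff ℝ (⊤ : ℕ∞) ψ →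
      ‖v ψ‖ ≤ C₀ * ∑ α ∈ (Fintype.piFinset fun _ : Fin N => Finset.range (q + 1)).filter
          (fun α => ∑ j, α j ≤ q),
        sSup ((fun x => ‖pderivMulti α ψ x‖) '' closure U))
    (φ : EuclideanSpace ℝ (Fin N) → ℂ) (hφ : ContDiff ℝ (⊤ : ℕ∞) φ)
    (hφc : HasCompactSupport φ) (hφU : tsupport φ ⊆ U) :
    ∃ Cb > (0 : ℝ), ∀ τ ∈ K', ∀ ξ : EuclideanSpace ℝ (Fin N),
      ‖(cp : ℂ) * v (fun x => φ x * Complex.exp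
          (Complex.I * ((dotR (τ - x) ξ : ℝ) : ℂ) - (‖ξ‖ : ℂ) * p (cV (τ - x))))‖ ≤
        Cb * (1 + ‖ξ‖) ^ q  := by
  classical
  obtain ⟨C₀, hC₀, hvb⟩ := hv
  set Q : EuclideanSpace ℝ (Fin N) → ℂ := fun y => p (cV y) with hQdef
  have hQ : ContDiff ℝ (⊤ : ℕ∞) Q := by
    obtain ⟨a, S, hdeg, hrepr⟩ := hp
    have hQeq : Q = fun y : EuclideanSpace ℝ (Fin N) =>
        ∑ α ∈ S, (a α : ℂ) * ∏ j, ((y j : ℝ) : ℂ) ^ (α j) := by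
      funext y
      rw [hQdef]
      simpa [cV] using hrepr (cV y)
    rw [hQeq]
    exact ContDiff.sum fun α _ => contDiff_const.mul (Stmt15Aux.contDiff_prod_pow α)
  have hRe : ∀ y : EuclideanSpace ℝ (Fin N), 0 ≤ (Q y).re := by
    intro y
    refine le_trans ?_ (hlow y)
    positivity
  have hall : ∀ α : Fin N → ℕ, ∃ M : ℝ, 0 ≤ M ∧ ((∑ j, α j) ≤ q →
      ∀ τ ∈ K', ∀ ξ : EuclideanSpace ℝ (Fin N),
        sSup ((fun x => ‖pderivMulti α
            (fun x => φ x * Complex.exp (Stmt15Aux.gfun Q ξ τ x)) x‖) '' closure U)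
          ≤ M * (1 + ‖ξ‖) ^ q) := by
    intro α
    obtain ⟨P, hSym, hEq⟩ := Stmt15Aux.key φ hφ hQ
      ((List.finRange N).flatMap fun j => List.replicate (α j) j)
    obtain ⟨L, hGood, hEval⟩ := hSym
    have hcomp : IsCompact (K' ×ˢ closure U) := hK'.prod hUbdd.isCompact_closure
    obtain ⟨B, hB⟩ := hcomp.exists_bound_of_continuousOn
      ((Stmt15Aux.amplSum_continuous L (fun pr hpr => (hGood pr hpr).1)).continuousOn)
    refine ⟨max B 0, le_max_right _ _, ?_⟩
    intro hαq τ hτ ξ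
    have hlen : ((List.finRange N).flatMap fun j => List.replicate (α j) j).length
        = ∑ j, α j := by
      simp [List.length_flatMap, Function.comp_def, Fin.sum_univ_def]
    refine Real.sSup_le ?_ (by positivity)
    rintro r ⟨x, hx, rfl⟩
    have h1 : pderivMulti α (fun x => φ x * Complex.exp (Stmt15Aux.gfun Q ξ τ x)) x
        = P ξ τ x * Complex.exp (Stmt15Aux.gfun Q ξ τ x) := hEq ξ τ x
    show ‖pderivMulti α (fun x => φ x * Complex.exp (Stmt15Aux.gfun Q ξ τ x)) x‖ ≤ _
    rw [h1, norm_mul]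
    have h2 : ‖P ξ τ x‖ ≤ (1 + ‖ξ‖) ^ q * (max B 0) := by
      rw [hEval ξ τ x]
      refine le_trans (Stmt15Aux.eval_norm_le L hGood ξ τ x) ?_
      have hc1 : (1 + ‖ξ‖) ^ ((List.finRange N).flatMap
          fun j => List.replicate (α j) j).length ≤ (1 + ‖ξ‖) ^ q :=
        pow_le_pow_right₀ (Stmt15Aux.one_le_one_add_norm ξ) (by rw [hlen]; exact hαq)
      have hc2 : (L.map fun pr => ‖pr.2 (τ, x)‖).sum ≤ max B 0 := by
        refine le_trans ?_ (le_max_left B 0)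
        refine le_trans (le_abs_self _) ?_
        have := hB (τ, x) (Set.mk_mem_prod hτ hx)
        simpa [Real.norm_eq_abs] using this
      exact mul_le_mul hc1 hc2 (Stmt15Aux.amplSum_nonneg L (τ, x)) (by positivity)
    calc ‖P ξ τ x‖ * ‖Complex.exp (Stmt15Aux.gfun Q ξ τ x)‖
        ≤ ‖P ξ τ x‖ * 1 :=
          mul_le_mul_of_nonneg_left (Stmt15Aux.norm_exp_gfun_le hRe ξ τ x) (norm_nonneg _)
      _ = ‖P ξ τ x‖ := mul_one _
      _ ≤ (1 + ‖ξ‖) ^ q * (max B 0) := h2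
      _ = (max B 0) * (1 + ‖ξ‖) ^ q := mul_comm _ _
  choose M hM0 hMb using hall
  set A := (Fintype.piFinset fun _ : Fin N => Finset.range (q + 1)).filter
    (fun α => ∑ j, α j ≤ q) with hA
  set Sm := ∑ α ∈ A, M α with hSm
  have hSm0 : 0 ≤ Sm := Finset.sum_nonneg fun α _ => hM0 α
  refine ⟨cp * (C₀ * Sm) + 1, by positivity, ?_⟩
  intro τ hτ ξ
  have hsmooth : ContDiff ℝ (⊤ : ℕ∞)
      (fun x => φ x * Complex.exp (Stmt15Aux.gfun Q ξ τ x)) :=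
    hφ.mul (contDiff_exp.comp (Stmt15Aux.gfun_contDiff hQ ξ τ))
  have hb := hvb _ hsmooth
  have hsum : ∑ α ∈ A, sSup ((fun x => ‖pderivMulti α
      (fun x => φ x * Complex.exp (Stmt15Aux.gfun Q ξ τ x)) x‖) '' closure U)
      ≤ Sm * (1 + ‖ξ‖) ^ q := by
    rw [hSm, Finset.sum_mul]
    exact Finset.sum_le_sum fun α hα =>
      hMb α (Finset.mem_filter.1 hα).2 τ hτ ξ
  have hnorm : ‖((cp : ℝ) : ℂ)‖ = cp := by
    rw [Complex.norm_real, Real.norm_eq_abs, abs_of_pos hcp]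
  have hmain : ‖v (fun x => φ x * Complex.exp (Stmt15Aux.gfun Q ξ τ x))‖
      ≤ C₀ * (Sm * (1 + ‖ξ‖) ^ q) :=
    le_trans hb (mul_le_mul_of_nonneg_left hsum hC₀.le)
  have hgoal : ‖(↑cp : ℂ) * v (fun x => φ x * Complex.exp (Stmt15Aux.gfun Q ξ τ x))‖
      ≤ (cp * (C₀ * Sm) + 1) * (1 + ‖ξ‖) ^ q := by
    rw [norm_mul, hnorm]
    have hpow : (0 : ℝ) ≤ (1 + ‖ξ‖) ^ q := by positivity
    nlinarith [mul_le_mul_of_nonneg_left hmain hcp.le, norm_nonneg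
      (v (fun x => φ x * Complex.exp (Stmt15Aux.gfun Q ξ τ x)))]
  exact hgoal

end
end

section
/- Let (M_k)_{k≥0} be a sequence of positive real numbers such that the associated function M(t) = sup_{k≥0} log(t^k/M_k) is finite for every t > 0. Let U ⊂ ℝ^N be a bounded open set, let φ ∈ C_c^∞(ℝ^N) have support contained in U, and let r > 0 be such that ‖φ‖_{r,U} := sup_{α ∈ ℤ₊^N} sup_{x ∈ closure(U)} |∂^α φ(x)| / (r^{|α|} M_{|α|}) is finite. Then for every ξ ∈ ℝ^N \ {0}: |∫_U e^{i x·ξ} φ(x) dx| ≤ vol(U) · ‖φ‖_{r,U} · e^{−M(|ξ|/(√N · r))}, where vol(U) is the Lebesgue measure of U. -/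
open MeasureTheory Metric Complex Filter

noncomputable section

/-- The associated function `M(t) = sup_k log (t^k / M_k)`. -/
def assocFn (M : ℕ → ℝ) (t : ℝ) : ℝ := ⨆ n : ℕ, Real.log (t ^ n / M n)

set_option maxHeartbeats 1000000
variable {N : ℕ}

lemma tsupport_fderiv_eval (g : EuclideanSpace ℝ (Fin N) → ℂ) (v : EuclideanSpace ℝ (Fin N)) :
    tsupport (fun x => fderiv ℝ g x v) ⊆ tsupport g := by
  apply closure_minimal _ isClosed_closure
  intro x hx
  have hne : fderiv ℝ g x ≠ 0 := by
    intro h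
    apply hx
    simp only [Function.mem_support, ne_eq, not_not] at hx ⊢
    simp [h]
  exact support_fderiv_subset ℝ hne

lemma pderivList_contDiff (l : List (Fin N)) (f : EuclideanSpace ℝ (Fin N) → ℂ)
    (hf : ContDiff ℝ (⊤ : ℕ∞) f) : ContDiff ℝ (⊤ : ℕ∞) (pderivList l f) := by
  induction l with
  | nil => exact hf
  | cons j l ih =>
    exact (ContinuousLinearMap.apply ℝ ℂ (EuclideanSpace.single j (1:ℝ))).contDiff.comp
      (ih.fderiv_right (by simp))

lemma pderivList_tsupport (l : List (Fin N)) (f : EuclideanSpace ℝ (Fin N) → ℂ) :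
    tsupport (pderivList l f) ⊆ tsupport f := by
  induction l with
  | nil => exact subset_rfl
  | cons j l ih => exact (tsupport_fderiv_eval (pderivList l f) _).trans ih

lemma pderivList_hasCompactSupport (l : List (Fin N)) (f : EuclideanSpace ℝ (Fin N) → ℂ)
    (hf : HasCompactSupport f) : HasCompactSupport (pderivList l f) :=
  IsCompact.of_isClosed_subset hf isClosed_closure (pderivList_tsupport l f)

lemma flatMap_single (j : Fin N) (k : ℕ) :
    ((List.finRange N).flatMap fun i => List.replicate ((Pi.single j k : Fin N → ℕ) i) i)
      = List.replicate k j := by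
  have h : ∀ l : List (Fin N),
      (l.flatMap fun i => List.replicate ((Pi.single j k : Fin N → ℕ) i) i)
        = List.replicate (k * l.count j) j := by
    intro l
    induction l with
    | nil => simp
    | cons a l ih =>
      rw [List.flatMap_cons, ih, List.count_cons]
      by_cases ha : a = j
      · subst ha
        simp only [Pi.single_eq_same, beq_self_eq_true, if_true, mul_add, mul_one, Nat.add_comm (k * List.count a l) k]
        rw [List.replicate_add]
      · simp [Pi.single_eq_of_ne ha, ha, (Ne.symm ha)]
  rw [h, List.count_eq_one_of_mem (List.nodup_finRange N) (List.mem_finRange j), mul_one]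


lemma dotR_eq_inner (x ξ : EuclideanSpace ℝ (Fin N)) : dotR x ξ = inner ℝ ξ x := by
  simp [dotR, PiLp.inner_apply, RCLike.inner_apply, mul_comm]

lemma eker_hasFDerivAt (ξ x : EuclideanSpace ℝ (Fin N)) :
    HasFDerivAt (fun y => Complex.exp (Complex.I * ((dotR y ξ : ℝ) : ℂ)))
      ((Complex.exp (Complex.I * ((dotR x ξ : ℝ) : ℂ))) •
        ((Complex.I : ℂ) • (Complex.ofRealCLM.comp (innerSL ℝ ξ)))) x := by
  have h := ((((Complex.I : ℂ) • (Complex.ofRealCLM.comp (innerSL ℝ ξ)))).hasFDerivAt (x := x)).cexp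
  have he : ∀ y : EuclideanSpace ℝ (Fin N),
      (((Complex.I : ℂ) • (Complex.ofRealCLM.comp (innerSL ℝ ξ)))) y
        = Complex.I * ((dotR y ξ : ℝ) : ℂ) := by
    intro y; simp [dotR_eq_inner, smul_eq_mul]
  simp only [he] at h
  exact h

lemma eker_continuous (ξ : EuclideanSpace ℝ (Fin N)) :
    Continuous (fun y => Complex.exp (Complex.I * ((dotR y ξ : ℝ) : ℂ))) := by
  refine continuous_iff_continuousAt.2 fun x => (eker_hasFDerivAt ξ x).continuousAt

lemma hcs_mul {h g : EuclideanSpace ℝ (Fin N) → ℂ} (hgc : HasCompactSupport g) :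
    HasCompactSupport (fun x => h x * g x) := by
  apply IsCompact.of_isClosed_subset hgc isClosed_closure
  apply closure_minimal _ isClosed_closure
  intro x hx
  simp only [Function.mem_support] at hx
  exact subset_closure (right_ne_zero_of_mul hx)

lemma ibp (ξ : EuclideanSpace ℝ (Fin N)) (j : Fin N) (g : EuclideanSpace ℝ (Fin N) → ℂ)
    (hg : ContDiff ℝ (⊤ : ℕ∞) g) (hgc : HasCompactSupport g) :
    ∫ x, Complex.exp (Complex.I * ((dotR x ξ : ℝ) : ℂ)) *
        fderiv ℝ g x (EuclideanSpace.single j 1)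
      = -(Complex.I * ((ξ j : ℝ) : ℂ)) *
        ∫ x, Complex.exp (Complex.I * ((dotR x ξ : ℝ) : ℂ)) * g x := by
  set e : EuclideanSpace ℝ (Fin N) → ℂ :=
    fun y => Complex.exp (Complex.I * ((dotR y ξ : ℝ) : ℂ)) with he
  set v : EuclideanSpace ℝ (Fin N) := EuclideanSpace.single j 1 with hv
  have hde : ∀ x, fderiv ℝ e x = e x • ((Complex.I : ℂ) • (Complex.ofRealCLM.comp (innerSL ℝ ξ))) :=
    fun x => (eker_hasFDerivAt ξ x).fderiv
  have hdev : ∀ x, fderiv ℝ e x v = (Complex.I * ((ξ j : ℝ) : ℂ)) * e x := by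
    intro x
    rw [hde x]
    simp [hv, EuclideanSpace.inner_single_right, smul_eq_mul]
    ring
  have hecont : Continuous e := eker_continuous ξ
  have hg'cont : Continuous (fun x => fderiv ℝ g x v) :=
    ((ContinuousLinearMap.apply ℝ ℂ v).contDiff.comp (hg.fderiv_right (m := (⊤ : ℕ∞)) (by simp))).continuous
  have hg'supp : HasCompactSupport (fun x => fderiv ℝ g x v) :=
    IsCompact.of_isClosed_subset hgc isClosed_closure (tsupport_fderiv_eval g v)
  have h1 : Integrable (fun x => fderiv ℝ e x v * g x) := by
    simp only [hdev]
    apply Continuous.integrable_of_hasCompactSupport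
    · exact (continuous_const.mul hecont).mul hg.continuous
    · exact hcs_mul hgc
  have h2 : Integrable (fun x => e x * fderiv ℝ g x v) :=
    Continuous.integrable_of_hasCompactSupport (hecont.mul hg'cont) (hcs_mul hg'supp)
  have h3 : Integrable (fun x => e x * g x) :=
    Continuous.integrable_of_hasCompactSupport (hecont.mul hg.continuous) (hcs_mul hgc)
  have key := integral_mul_fderiv_eq_neg_fderiv_mul_of_integrable h1 h2 h3
    (fun x _ => (eker_hasFDerivAt ξ x).differentiableAt) (fun x _ => hg.differentiable (by simp) x)
  rw [key]
  have hh : ∀ x, fderiv ℝ e x v * g x = (Complex.I * ((ξ j : ℝ) : ℂ)) * (e x * g x) := by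
    intro x; rw [hdev]; ring
  simp only [hh]
  rw [integral_const_mul, neg_mul]

lemma iter_ibp (ξ : EuclideanSpace ℝ (Fin N)) (j : Fin N)
    (φ : EuclideanSpace ℝ (Fin N) → ℂ) (hφ : ContDiff ℝ (⊤ : ℕ∞) φ) (hφc : HasCompactSupport φ)
    (k : ℕ) :
    ∫ x, Complex.exp (Complex.I * ((dotR x ξ : ℝ) : ℂ)) * pderivList (List.replicate k j) φ x
      = (-(Complex.I * ((ξ j : ℝ) : ℂ))) ^ k *
        ∫ x, Complex.exp (Complex.I * ((dotR x ξ : ℝ) : ℂ)) * φ x := by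
  induction k with
  | zero => simp [pderivList]
  | succ k ih =>
    rw [List.replicate_succ]
    have hg := pderivList_contDiff (List.replicate k j) φ hφ
    have hgc := pderivList_hasCompactSupport (List.replicate k j) φ hφc
    have := ibp ξ j (pderivList (List.replicate k j) φ) hg hgc
    calc ∫ x, Complex.exp (Complex.I * ((dotR x ξ : ℝ) : ℂ)) *
          pderivList (j :: List.replicate k j) φ x
        = -(Complex.I * ((ξ j : ℝ) : ℂ)) *
          ∫ x, Complex.exp (Complex.I * ((dotR x ξ : ℝ) : ℂ)) *
            pderivList (List.replicate k j) φ x := this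
      _ = (-(Complex.I * ((ξ j : ℝ) : ℂ))) ^ (k + 1) *
          ∫ x, Complex.exp (Complex.I * ((dotR x ξ : ℝ) : ℂ)) * φ x := by
          rw [ih, pow_succ]; ring
/-- Decay of the Fourier transform of a compactly supported
Denjoy–Carleman function: `|∫_U e^{ix·ξ} φ(x) dx| ≤ vol(U)·‖φ‖_{r,U}·e^{-M(|ξ|/(√N r))}`.
Here `‖φ‖_{r,U} = sSup S` where `S` is the set of the quotients
`‖∂^α φ(x)‖ / (r^{|α|} M_{|α|})`, `x ∈ closure U`. -/

theorem stmt19 (N : ℕ) (hN : 1 ≤ N) (M : ℕ → ℝ) (hMpos : ∀ n, 0 < M n)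
    (hMfin : ∀ t > (0 : ℝ), BddAbove (Set.range fun n : ℕ => Real.log (t ^ n / M n)))
    (U : Set (EuclideanSpace ℝ (Fin N))) (hUopen : IsOpen U)
    (hUbdd : Bornology.IsBounded U)
    (φ : EuclideanSpace ℝ (Fin N) → ℂ) (hφ : ContDiff ℝ (⊤ : ℕ∞) φ)
    (hφc : HasCompactSupport φ) (hφU : tsupport φ ⊆ U)
    (r : ℝ) (hr : 0 < r)
    (S : Set ℝ)
    (hSdef : S = {v : ℝ | ∃ α : Fin N → ℕ, ∃ x ∈ closure U,
      v = ‖pderivMulti α φ x‖ / (r ^ (∑ j, α j) * M (∑ j, α j))})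
    (hSbdd : BddAbove S) :
    ∀ ξ : EuclideanSpace ℝ (Fin N), ξ ≠ 0 →
      ‖∫ x in U, Complex.exp (Complex.I * ((dotR x ξ : ℝ) : ℂ)) * φ x‖ ≤
        (volume U).toReal * sSup S *
          Real.exp (-(assocFn M (‖ξ‖ / (Real.sqrt N * r)))) := by
  intro ξ hξ
  classical
  have hne : Nonempty (Fin N) := ⟨⟨0, hN⟩⟩
  obtain ⟨j, -, hj⟩ := Finset.exists_max_image Finset.univ (fun i => |ξ i|) Finset.univ_nonempty
  have hNpos : (0:ℝ) < Real.sqrt N := Real.sqrt_pos.2 (by exact_mod_cast hN)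
  have hnorm : ‖ξ‖ ≤ Real.sqrt N * |ξ j| := by
    rw [EuclideanSpace.norm_eq]
    have h1 : ∑ i, ‖ξ i‖ ^ 2 ≤ ∑ _i : Fin N, |ξ j| ^ 2 := by
      apply Finset.sum_le_sum
      intro i _
      simpa [Real.norm_eq_abs] using pow_le_pow_left₀ (abs_nonneg (ξ i)) (hj i (Finset.mem_univ i)) 2
    calc Real.sqrt (∑ i, ‖ξ i‖ ^ 2) ≤ Real.sqrt (∑ _i : Fin N, |ξ j| ^ 2) := Real.sqrt_le_sqrt h1
      _ = Real.sqrt N * |ξ j| := by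
          rw [Finset.sum_const, Finset.card_univ, Fintype.card_fin, nsmul_eq_mul,
            Real.sqrt_mul (by positivity) _, Real.sqrt_sq (abs_nonneg _)]
  have hξnorm : (0:ℝ) < ‖ξ‖ := norm_pos_iff.2 hξ
  have hξj : 0 < |ξ j| := by nlinarith
  have hnorme : ∀ x : EuclideanSpace ℝ (Fin N),
      ‖Complex.exp (Complex.I * ((dotR x ξ : ℝ) : ℂ))‖ = 1 := by
    intro x
    rw [mul_comm]
    exact Complex.norm_exp_ofReal_mul_I _
  have hS0 : 0 ≤ sSup S := by
    rcases Set.eq_empty_or_nonempty S with hSe | hSne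
    · simp [hSe, Real.sSup_empty]
    · obtain ⟨v, hv⟩ := hSne
      refine le_trans ?_ (le_csSup hSbdd hv)
      rw [hSdef] at hv
      obtain ⟨α, x, hx, rfl⟩ := hv
      exact div_nonneg (norm_nonneg _) (mul_nonneg (by positivity) (hMpos _).le)
  have hvol : volume U < ⊤ := hUbdd.measure_lt_top
  set Iv := ∫ x in U, Complex.exp (Complex.I * ((dotR x ξ : ℝ) : ℂ)) * φ x with hIv
  set C := (volume U).toReal * sSup S with hCdef
  have hC0 : 0 ≤ C := mul_nonneg ENNReal.toReal_nonneg hS0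
  have hstep : ∀ k : ℕ, ‖Iv‖ * |ξ j| ^ k ≤ C * (r ^ k * M k) := by
    intro k
    set g := pderivList (List.replicate k j) φ with hgdef
    have hgsupp : tsupport g ⊆ U := (pderivList_tsupport _ _).trans hφU
    have hgcont : Continuous g := (pderivList_contDiff _ _ hφ).continuous
    have hsetU : ∫ x in U, Complex.exp (Complex.I * ((dotR x ξ : ℝ) : ℂ)) * g x
        = ∫ x, Complex.exp (Complex.I * ((dotR x ξ : ℝ) : ℂ)) * g x := by
      apply setIntegral_eq_integral_of_forall_compl_eq_zero
      intro x hx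
      have hg0 : g x = 0 := image_eq_zero_of_notMem_tsupport (fun h => hx (hgsupp h))
      rw [hg0, mul_zero]
    have hsetφ : Iv = ∫ x, Complex.exp (Complex.I * ((dotR x ξ : ℝ) : ℂ)) * φ x := by
      apply setIntegral_eq_integral_of_forall_compl_eq_zero
      intro x hx
      have hφ0 : φ x = 0 := image_eq_zero_of_notMem_tsupport (fun h => hx (hφU h))
      rw [hφ0, mul_zero]
    have hiter := iter_ibp ξ j φ hφ hφc k
    have h1 : ‖Iv‖ * |ξ j| ^ k
        = ‖∫ x in U, Complex.exp (Complex.I * ((dotR x ξ : ℝ) : ℂ)) * g x‖ := by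
      rw [hsetU, ← hgdef] at *
      rw [hsetφ, hiter]
      rw [norm_mul, norm_pow, norm_neg, norm_mul, Complex.norm_I, one_mul,
        Complex.norm_real, Real.norm_eq_abs, mul_comm]
    have hbd : ∀ x ∈ U, ‖Complex.exp (Complex.I * ((dotR x ξ : ℝ) : ℂ)) * g x‖
        ≤ sSup S * (r ^ k * M k) := by
      intro x hx
      rw [norm_mul, hnorme, one_mul]
      have hsum : (∑ i, (Pi.single j k : Fin N → ℕ) i) = k := by
        rw [Finset.sum_pi_single']
        simp
      have hpm : pderivMulti (Pi.single j k) φ = g := by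
        rw [pderivMulti, flatMap_single, hgdef]
      have hmem : ‖g x‖ / (r ^ k * M k) ∈ S := by
        rw [hSdef]
        refine ⟨Pi.single j k, x, subset_closure hx, ?_⟩
        rw [hsum, hpm]
      have hle := le_csSup hSbdd hmem
      have hpos : 0 < r ^ k * M k := mul_pos (pow_pos hr k) (hMpos k)
      rw [div_le_iff₀ hpos] at hle
      nlinarith [hpos, hle]
    have h2 : ‖∫ x in U, Complex.exp (Complex.I * ((dotR x ξ : ℝ) : ℂ)) * g x‖
        ≤ sSup S * (r ^ k * M k) * (volume U).toReal := by
      apply norm_setIntegral_le_of_norm_le_const hvol hbd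
    rw [h1]
    refine h2.trans (le_of_eq ?_)
    rw [hCdef]
    ring
  set t := ‖ξ‖ / (Real.sqrt N * r) with htdef
  have htpos : 0 < t := div_pos hξnorm (by positivity)
  have hstep2 : ∀ k : ℕ, ‖Iv‖ * t ^ k ≤ C * M k := by
    intro k
    have h1 : t ≤ |ξ j| / r := by
      rw [htdef, div_le_div_iff₀ (by positivity) hr]
      nlinarith
    have h2 : t ^ k ≤ (|ξ j| / r) ^ k := pow_le_pow_left₀ htpos.le h1 k
    have h3 : (0:ℝ) < r ^ k := pow_pos hr k
    calc ‖Iv‖ * t ^ k ≤ ‖Iv‖ * (|ξ j| / r) ^ k :=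
          mul_le_mul_of_nonneg_left h2 (norm_nonneg _)
      _ = (‖Iv‖ * |ξ j| ^ k) / r ^ k := by rw [div_pow]; ring
      _ ≤ (C * (r ^ k * M k)) / r ^ k := by
            exact div_le_div_of_nonneg_right (hstep k) h3.le
      _ = C * M k := by field_simp
  rcases eq_or_lt_of_le (norm_nonneg Iv) with h0 | h0
  · rw [← h0]
    exact mul_nonneg hC0 (Real.exp_nonneg _)
  · have hCpos : 0 < C := by
      have h := hstep2 0
      simp only [pow_zero, mul_one] at h
      nlinarith [hMpos 0, h0]
    have hL : assocFn M t ≤ Real.log (C / ‖Iv‖) := by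
      rw [assocFn]
      apply ciSup_le
      intro n
      have h1 : t ^ n / M n ≤ C / ‖Iv‖ := by
        rw [div_le_div_iff₀ (hMpos n) h0]
        nlinarith [hstep2 n]
      have h2 : 0 < t ^ n / M n := div_pos (pow_pos htpos n) (hMpos n)
      exact Real.log_le_log h2 h1
    have hexp : Real.exp (assocFn M t) ≤ C / ‖Iv‖ := by
      rw [← Real.exp_log (div_pos hCpos h0)]
      exact Real.exp_le_exp.2 hL
    rw [Real.exp_neg, ← div_eq_mul_inv, le_div_iff₀ (Real.exp_pos _)]
    calc ‖Iv‖ * Real.exp (assocFn M t) ≤ ‖Iv‖ * (C / ‖Iv‖) :=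
          mul_le_mul_of_nonneg_left hexp (norm_nonneg _)
      _ = C := mul_div_cancel₀ C h0.ne'

end
end
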